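/- arXiv:1807.06858 — 5 statements merged into one kernel-verified Lean document; each statement's English description precedes it below -/
import Mathlib

section
/- For a reversible irreducible finite Markov chain P with nonnegative spectrum and relaxation time t_rel = 1/(1−λ₂), for any state x and t ≥ 0: g_t(x,x) − (t+1)π(x) ≤ (e/(e−1)) · g_{(⌈t_rel⌉−1) ∧ t}(x,x). -/
open Finset

variable {V : Type*}

noncomputable def pip [Fintype V] (pi f g : V → ℝ) : ℝ := ∑ x, pi x * f x * g x

noncomputable def secondEig [Fintype V] (pi : V → ℝ) (P : Matrix V V ℝ) : ℝ :=
  sSup {r : ℝ | ∃ f : V → ℝ, pip pi f f = 1 ∧ (∑ x, pi x * f x) = 0 ∧ r = pip pi f (P.mulVec f)}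

noncomputable def trelT [Fintype V] (pi : V → ℝ) (P : Matrix V V ℝ) : ℝ := 1 / (1 - secondEig pi P)

noncomputable def Dmat [Fintype V] [DecidableEq V] (h : V) : Matrix V V ℝ :=
  Matrix.diagonal fun y => if y = h then 0 else 1

noncomputable def opNorm [Fintype V] (pi : V → ℝ) (A : Matrix V V ℝ) : ℝ :=
  sSup {r : ℝ | ∃ f : V → ℝ, pip pi f f ≤ 1 ∧ r = Real.sqrt (pip pi (A.mulVec f) (A.mulVec f))}

/-- probability, starting at `y`, that the chain avoids `x` during steps `0..t`
(i.e. `P_y(τ_x > t)`), written as a sum over length-`t` paths. -/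
noncomputable def survProb [Fintype V] [DecidableEq V] (P : Matrix V V ℝ) (x y : V) (t : ℕ) : ℝ :=
  ∑ p : Fin (t+1) → V,
    if p 0 = y ∧ (∀ s, p s ≠ x) then ∏ s : Fin t, P (p s.castSucc) (p s.succ) else 0

/-- `Ehit P x y = E_y[τ_x]`, via `E[τ] = ∑_t P(τ > t)`. -/
noncomputable def Ehit [Fintype V] [DecidableEq V] (P : Matrix V V ℝ) (x y : V) : ℝ :=
  ∑' t : ℕ, survProb P x y t

noncomputable def thit [Fintype V] [DecidableEq V] (P : Matrix V V ℝ) : ℝ :=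
  ⨆ q : V × V, Ehit P q.1 q.2

/-- expected hitting time of `x` when the initial state has law `μ`. -/
noncomputable def EhitFrom [Fintype V] [DecidableEq V] (P : Matrix V V ℝ) (μ : V → ℝ) (x : V) : ℝ :=
  ∑' t : ℕ, ∑ y, μ y * survProb P x y t

/-- probability, starting from `pi`, that `X_s ≠ h s` for all `0 ≤ s ≤ t`. -/
noncomputable def avoidProb [Fintype V] [DecidableEq V] (pi : V → ℝ) (P : Matrix V V ℝ)
    (t : ℕ) (h : Fin (t+1) → V) : ℝ :=
  ∑ p : Fin (t+1) → V,
    if ∀ s, p s ≠ h s then pi (p 0) * ∏ s : Fin t, P (p s.castSucc) (p s.succ) else 0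

/-- expected number of visits to `x` strictly before hitting `A`, started at `x`. -/
noncomputable def visitsBeforeHit [Fintype V] [DecidableEq V] (P : Matrix V V ℝ)
    (A : Finset V) (x : V) : ℝ :=
  ∑' t : ℕ, ∑ p : Fin (t+1) → V,
    if p 0 = x ∧ p (Fin.last t) = x ∧ (∀ s, p s ∉ A) then
      ∏ s : Fin t, P (p s.castSucc) (p s.succ) else 0

noncomputable def lazyP [Fintype V] [DecidableEq V] (G : SimpleGraph V) [DecidableRel G.Adj] :
    Matrix V V ℝ :=
  Matrix.of fun x y => if x = y then 1/2 else if G.Adj x y then 1/(2 * (G.degree x : ℝ)) else 0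

noncomputable def lazyPi [Fintype V] [DecidableEq V] (G : SimpleGraph V) [DecidableRel G.Adj] :
    V → ℝ :=
  fun x => (G.degree x : ℝ) / ∑ v, (G.degree v : ℝ)

noncomputable def dminR [Fintype V] [Nonempty V] [DecidableEq V] (G : SimpleGraph V)
    [DecidableRel G.Adj] : ℝ :=
  Finset.univ.inf' Finset.univ_nonempty fun v => (G.degree v : ℝ)

noncomputable def davgR [Fintype V] [DecidableEq V] (G : SimpleGraph V) [DecidableRel G.Adj] : ℝ :=
  (∑ v, (G.degree v : ℝ)) / Fintype.card V

noncomputable def Pstar [Fintype V] [DecidableEq V] (pi : V → ℝ) (γ : ℝ) : Matrix V V ℝ :=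
  Matrix.of fun x y => (1 - γ) * (if x = y then 1 else 0) + γ * pi y

set_option linter.unusedSectionVars false
set_option linter.unnecessarySeqFocus false
set_option maxHeartbeats 1000000

section MyAux
variable {V : Type*}

lemma pipP_eqX [Fintype V] (P : Matrix V V ℝ) (pi : V → ℝ) (f g : V → ℝ) :
    pip pi f (P.mulVec g) = ∑ x, ∑ y, pi x * P x y * f x * g y := by
  unfold pip Matrix.mulVec dotProduct
  refine Finset.sum_congr rfl fun x _ => ?_
  rw [Finset.mul_sum]
  exact Finset.sum_congr rfl fun y _ => by ring

lemma pip_commX [Fintype V] (pi f g : V → ℝ) : pip pi f g = pip pi g f := by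
  unfold pip; exact Finset.sum_congr rfl fun x _ => by ring

lemma pip_nonnegX [Fintype V] (pi : V → ℝ) (hpi : ∀ x, 0 < pi x) (f : V → ℝ) :
    0 ≤ pip pi f f :=
  Finset.sum_nonneg fun x _ => by
    have := (hpi x).le; nlinarith [sq_nonneg (f x)]

lemma pipP_symmX [Fintype V] (P : Matrix V V ℝ) (pi : V → ℝ)
    (hrev : ∀ x y, pi x * P x y = pi y * P y x) (f g : V → ℝ) :
    pip pi f (P.mulVec g) = pip pi g (P.mulVec f) := by
  rw [pipP_eqX P pi, pipP_eqX P pi, Finset.sum_comm]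
  refine Finset.sum_congr rfl fun y _ => Finset.sum_congr rfl fun x _ => ?_
  rw [show pi x * P x y * f x * g y = (pi x * P x y) * (f x * g y) by ring, hrev]
  ring

lemma stationaryX [Fintype V] (P : Matrix V V ℝ) (pi : V → ℝ)
    (hrev : ∀ x y, pi x * P x y = pi y * P y x) (hrow : ∀ x, ∑ y, P x y = 1)
    (f : V → ℝ) : ∑ x, pi x * (P.mulVec f) x = ∑ x, pi x * f x := by
  unfold Matrix.mulVec dotProduct
  have h0 : ∀ x, pi x * (∑ y, P x y * f y) = ∑ y, (pi x * P x y) * f y := by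
    intro x; rw [Finset.mul_sum]; exact Finset.sum_congr rfl fun y _ => by ring
  simp only [h0]
  rw [Finset.sum_comm]
  refine Finset.sum_congr rfl fun y _ => ?_
  calc ∑ x, pi x * P x y * f y = ∑ x, pi y * P y x * f y := by
        exact Finset.sum_congr rfl fun x _ => by rw [hrev]
    _ = pi y * f y := by
        rw [← Finset.sum_mul, ← Finset.mul_sum, hrow]; ring

lemma pip_self_eq_zeroX [Fintype V] (pi : V → ℝ) (hpi : ∀ x, 0 < pi x)
    (f : V → ℝ) (h : pip pi f f = 0) : ∀ x, f x = 0 := by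
  intro x
  have hterm : ∀ y ∈ Finset.univ, (0:ℝ) ≤ pi y * f y * f y := fun y _ => by
    have := (hpi y).le; nlinarith [sq_nonneg (f y)]
  have h1 := (Finset.sum_eq_zero_iff_of_nonneg hterm).mp h x (Finset.mem_univ x)
  have h3 : pi x * (f x * f x) = 0 := by rw [← mul_assoc]; exact h1
  have h4 := (mul_eq_zero.mp h3).resolve_left (ne_of_gt (hpi x))
  exact mul_self_eq_zero.mp h4

lemma pip_smulX [Fintype V] (pi : V → ℝ) (c : ℝ) (f g : V → ℝ) :
    pip pi (fun x => c * f x) (fun x => c * g x) = c^2 * pip pi f g := by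
  unfold pip; rw [Finset.mul_sum]; exact Finset.sum_congr rfl fun x _ => by ring

lemma mulVec_const_mulX [Fintype V] (P : Matrix V V ℝ) (c : ℝ) (f : V → ℝ) :
    P.mulVec (fun y => c * f y) = fun x => c * P.mulVec f x := by
  funext x
  unfold Matrix.mulVec dotProduct
  rw [Finset.mul_sum]; exact Finset.sum_congr rfl fun y _ => by ring

end MyAux

section MyMain
variable {V : Type*} [Fintype V] [DecidableEq V] (P : Matrix V V ℝ) (pi : V → ℝ)
  (hP : ∀ x y, 0 ≤ P x y) (hrow : ∀ x, ∑ y, P x y = 1)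
  (hpi : ∀ x, 0 < pi x) (hpisum : ∑ x, pi x = 1)
  (hrev : ∀ x y, pi x * P x y = pi y * P y x)
  (hpsd : ∀ f : V → ℝ, 0 ≤ pip pi f (P.mulVec f))

include hP hrow hpi hpisum hrev hpsd

lemma dirichletX (f : V → ℝ) :
    pip pi f f - pip pi f (P.mulVec f) =
      (1/2) * ∑ x, ∑ y, pi x * P x y * (f x - f y)^2 := by
  have expand : ∀ x y, pi x * P x y * (f x - f y)^2 =
      pi x * P x y * f x * f x + pi x * P x y * f y * f y
        - 2 * (pi x * P x y * f x * f y) := by intro x y; ring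
  simp only [expand, Finset.sum_sub_distrib, Finset.sum_add_distrib]
  have h1 : ∑ x, ∑ y, pi x * P x y * f x * f x = pip pi f f := by
    unfold pip
    refine Finset.sum_congr rfl fun x _ => ?_
    rw [← Finset.sum_mul, ← Finset.sum_mul, ← Finset.mul_sum, hrow]; ring
  have h2 : ∑ x, ∑ y, pi x * P x y * f y * f y = pip pi f f := by
    unfold pip
    rw [Finset.sum_comm]
    refine Finset.sum_congr rfl fun y _ => ?_
    calc ∑ x, pi x * P x y * f y * f y = ∑ x, P y x * (pi y * f y * f y) := by
          refine Finset.sum_congr rfl fun x _ => ?_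
          rw [show pi x * P x y * f y * f y = (pi x * P x y) * (f y * f y) by ring, hrev]
          ring
      _ = pi y * f y * f y := by rw [← Finset.sum_mul, hrow]; ring
  have h3 : ∑ x, ∑ y, 2 * (pi x * P x y * f x * f y)
      = 2 * pip pi f (P.mulVec f) := by
    rw [pipP_eqX P pi, Finset.mul_sum]
    exact Finset.sum_congr rfl fun x _ => by rw [Finset.mul_sum]
  rw [h1, h2, h3]; ring

lemma pipP_le_selfX (f : V → ℝ) : pip pi f (P.mulVec f) ≤ pip pi f f := by
  have h := dirichletX P pi hP hrow hpi hpisum hrev hpsd f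
  have hnn : 0 ≤ ∑ x, ∑ y, pi x * P x y * (f x - f y)^2 :=
    Finset.sum_nonneg fun x _ => Finset.sum_nonneg fun y _ => by
      have := (hpi x).le; have := hP x y; positivity
  linarith

lemma pipP_csX (f g : V → ℝ) :
    (pip pi f (P.mulVec g))^2 ≤ pip pi f (P.mulVec f) * pip pi g (P.mulVec g) := by
  have key : ∀ t : ℝ, 0 ≤ pip pi g (P.mulVec g) * (t * t)
      + (2 * pip pi f (P.mulVec g)) * t + pip pi f (P.mulVec f) := by
    intro t
    have h := hpsd (fun x => f x + t * g x)
    have expand : pip pi (fun x => f x + t * g x) (P.mulVec (fun x => f x + t * g x))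
        = pip pi f (P.mulVec f) + t * pip pi f (P.mulVec g) + t * pip pi g (P.mulVec f)
          + t^2 * pip pi g (P.mulVec g) := by
      simp only [pipP_eqX P pi, Finset.mul_sum, ← Finset.sum_add_distrib]
      exact Finset.sum_congr rfl fun x _ => Finset.sum_congr rfl fun y _ => by ring
    rw [expand, pipP_symmX P pi hrev g f] at h
    nlinarith [h]
  have hd := discrim_le_zero key
  unfold discrim at hd
  nlinarith [hd]

lemma ray_bddAboveX : BddAbove {r : ℝ | ∃ f : V → ℝ,
    pip pi f f = 1 ∧ (∑ x, pi x * f x) = 0 ∧ r = pip pi f (P.mulVec f)} := by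
  refine ⟨1, fun r hr => ?_⟩
  obtain ⟨f, h1, _, h3⟩ := hr
  rw [h3]
  calc pip pi f (P.mulVec f) ≤ pip pi f f :=
        pipP_le_selfX P pi hP hrow hpi hpisum hrev hpsd f
    _ = 1 := h1

lemma secondEig_nonnegX : 0 ≤ secondEig pi P := by
  unfold secondEig
  by_cases hne : ({r : ℝ | ∃ f : V → ℝ,
      pip pi f f = 1 ∧ (∑ x, pi x * f x) = 0 ∧ r = pip pi f (P.mulVec f)}).Nonempty
  · obtain ⟨r, hr⟩ := hne
    have hb := ray_bddAboveX P pi hP hrow hpi hpisum hrev hpsd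
    obtain ⟨f, h1, h2, h3⟩ := hr
    have h4 : 0 ≤ r := h3 ▸ hpsd f
    exact h4.trans (le_csSup hb ⟨f, h1, h2, h3⟩)
  · rw [Set.not_nonempty_iff_eq_empty.mp hne, Real.sSup_empty]

lemma secondEig_le_oneX : secondEig pi P ≤ 1 := by
  unfold secondEig
  by_cases hne : ({r : ℝ | ∃ f : V → ℝ,
      pip pi f f = 1 ∧ (∑ x, pi x * f x) = 0 ∧ r = pip pi f (P.mulVec f)}).Nonempty
  · refine csSup_le hne fun r hr => ?_
    obtain ⟨f, h1, _, h3⟩ := hr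
    rw [h3]
    exact (pipP_le_selfX P pi hP hrow hpi hpisum hrev hpsd f).trans_eq h1
  · rw [Set.not_nonempty_iff_eq_empty.mp hne, Real.sSup_empty]; norm_num

lemma rayleighX (f : V → ℝ) (hmean : ∑ x, pi x * f x = 0) :
    pip pi f (P.mulVec f) ≤ secondEig pi P * pip pi f f := by
  by_cases hz : pip pi f f = 0
  · have hf := pip_self_eq_zeroX pi hpi f hz
    have h5 : pip pi f (P.mulVec f) = 0 := by
      unfold pip; exact Finset.sum_eq_zero fun x _ => by rw [hf x]; ring
    rw [h5, hz, mul_zero]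
  · have hn : 0 < pip pi f f := lt_of_le_of_ne (pip_nonnegX pi hpi f) (Ne.symm hz)
    set n := pip pi f f with hn_def
    set c : ℝ := (Real.sqrt n)⁻¹ with hc
    set g : V → ℝ := fun x => c * f x with hg
    have hsq : Real.sqrt n * Real.sqrt n = n := Real.mul_self_sqrt hn.le
    have hspos : 0 < Real.sqrt n := Real.sqrt_pos.mpr hn
    have hc2 : c^2 = n⁻¹ := by rw [hc, inv_pow, Real.sq_sqrt hn.le]
    have hgg : pip pi g g = 1 := by
      rw [hg, pip_smulX pi, hc2, ← hn_def, inv_mul_cancel₀ hz]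
    have hgmean : ∑ x, pi x * g x = 0 := by
      have h5 : ∀ x, pi x * g x = c * (pi x * f x) := by intro x; rw [hg]; ring
      rw [Finset.sum_congr rfl fun x _ => h5 x, ← Finset.mul_sum, hmean, mul_zero]
    have hval : pip pi g (P.mulVec g) = pip pi f (P.mulVec f) / n := by
      rw [hg, mulVec_const_mulX P, pip_smulX pi, hc2, div_eq_inv_mul]
    have hmem : pip pi f (P.mulVec f) / n ∈ {r : ℝ | ∃ f : V → ℝ,
        pip pi f f = 1 ∧ (∑ x, pi x * f x) = 0 ∧ r = pip pi f (P.mulVec f)} :=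
      ⟨g, hgg, hgmean, hval.symm⟩
    have h6 := le_csSup (ray_bddAboveX P pi hP hrow hpi hpisum hrev hpsd) hmem
    unfold secondEig
    calc pip pi f (P.mulVec f) = (pip pi f (P.mulVec f) / n) * n := by field_simp
      _ ≤ _ * n := by exact mul_le_mul_of_nonneg_right h6 hn.le

lemma pow_entry_nonnegX : ∀ (t : ℕ) (x y : V), 0 ≤ (P ^ t) x y := by
  intro t
  induction t with
  | zero =>
    intro x y
    rw [pow_zero, Matrix.one_apply]
    split <;> norm_num
  | succ n ih =>
    intro x y
    rw [pow_succ, Matrix.mul_apply]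
    exact Finset.sum_nonneg fun z _ => mul_nonneg (ih x z) (hP z y)

lemma eq_on_posX (f : V → ℝ) (hedge : ∀ x y, 0 < P x y → f x = f y) :
    ∀ (t : ℕ) (x y : V), 0 < (P ^ t) x y → f x = f y := by
  intro t
  induction t with
  | zero =>
    intro x y h
    simp only [pow_zero, Matrix.one_apply] at h
    by_cases hxy : x = y
    · rw [hxy]
    · simp [hxy] at h
  | succ n ih =>
    intro x y h
    rw [pow_succ', Matrix.mul_apply] at h
    have h0 : (∑ _z : V, (0:ℝ)) < ∑ z, P x z * (P ^ n) z y := by simpa using h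
    obtain ⟨z, _, hz⟩ := Finset.exists_lt_of_sum_lt h0
    have h1 : 0 < P x z := by
      rcases lt_or_eq_of_le (hP x z) with h' | h'
      · exact h'
      · exfalso; rw [← h'] at hz; simp at hz
    have h2 : 0 < (P ^ n) z y := by
      rcases lt_or_eq_of_le
          (pow_entry_nonnegX P pi hP hrow hpi hpisum hrev hpsd n z y) with h' | h'
      · exact h'
      · exfalso; rw [← h'] at hz; simp at hz
    exact (hedge x z h1).trans (ih z y h2)

lemma secondEig_lt_oneX (hirr : ∀ x y, ∃ t : ℕ, 0 < (P ^ t) x y) :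
    secondEig pi P < 1 := by
  set Sp := {r : ℝ | ∃ f : V → ℝ,
      pip pi f f = 1 ∧ (∑ x, pi x * f x) = 0 ∧ r = pip pi f (P.mulVec f)} with hSp
  by_cases hne : Sp.Nonempty
  case neg =>
    have h7 : secondEig pi P = 0 := by
      unfold secondEig
      rw [← hSp, Set.not_nonempty_iff_eq_empty.mp hne, Real.sSup_empty]
    rw [h7]; norm_num
  case pos =>
  have hVne : Nonempty V := by
    by_contra h
    have : IsEmpty V := not_nonempty_iff.mp h
    rw [Finset.univ_eq_empty, Finset.sum_empty] at hpisum
    norm_num at hpisum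
  set S' : Set (V → ℝ) := {f | pip pi f f = 1 ∧ ∑ x, pi x * f x = 0} with hS'
  have hS'ne : S'.Nonempty := by
    obtain ⟨r, f, h1, h2, _⟩ := hne
    exact ⟨f, h1, h2⟩
  have himg : Sp = (fun f : V → ℝ => pip pi f (P.mulVec f)) '' S' := by
    ext r
    constructor
    · rintro ⟨f, h1, h2, h3⟩; exact ⟨f, ⟨h1, h2⟩, h3.symm⟩
    · rintro ⟨f, ⟨h1, h2⟩, h3⟩; exact ⟨f, h1, h2, h3.symm⟩
  have c1 : Continuous fun f : V → ℝ => pip pi f f := by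
    unfold pip
    exact continuous_finset_sum _ fun x _ =>
      (continuous_const.mul (continuous_apply x)).mul (continuous_apply x)
  have c2 : Continuous fun f : V → ℝ => ∑ x, pi x * f x :=
    continuous_finset_sum _ fun x _ => continuous_const.mul (continuous_apply x)
  have c3 : Continuous fun f : V → ℝ => pip pi f (P.mulVec f) := by
    have heq : (fun f : V → ℝ => pip pi f (P.mulVec f))
        = fun f : V → ℝ => ∑ x, ∑ y, pi x * P x y * f x * f y :=
      funext fun f => pipP_eqX P pi f f
    rw [heq]
    exact continuous_finset_sum _ fun x _ => continuous_finset_sum _ fun y _ =>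
      (continuous_const.mul (continuous_apply x)).mul (continuous_apply y)
  have hclosed : IsClosed S' := by
    have h8 : S' = (fun f : V → ℝ => pip pi f f) ⁻¹' {1}
        ∩ (fun f : V → ℝ => ∑ x, pi x * f x) ⁻¹' {0} := by
      ext f; simp [hS', Set.mem_preimage]
    rw [h8]
    exact (isClosed_singleton.preimage c1).inter (isClosed_singleton.preimage c2)
  have hbdd : Bornology.IsBounded S' := by
    rw [isBounded_iff_forall_norm_le]
    set m0 : ℝ := Finset.univ.inf' Finset.univ_nonempty pi with hm0
    have hm0pos : 0 < m0 := by
      rw [hm0]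
      exact (Finset.lt_inf'_iff _).mpr fun x _ => hpi x
    refine ⟨Real.sqrt m0⁻¹, fun f hf => ?_⟩
    rw [pi_norm_le_iff_of_nonneg (Real.sqrt_nonneg _)]
    intro x
    have hterm : ∀ y ∈ Finset.univ, (0:ℝ) ≤ pi y * f y * f y := fun y _ => by
      have := (hpi y).le; nlinarith [sq_nonneg (f y)]
    have hle : pi x * f x * f x ≤ 1 := by
      have h9 := Finset.single_le_sum hterm (Finset.mem_univ x)
      rw [show (∑ y, pi y * f y * f y) = pip pi f f from rfl, hf.1] at h9
      exact h9
    have hm0le : m0 ≤ pi x := Finset.inf'_le _ (Finset.mem_univ x)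
    have hfx2 : f x ^ 2 ≤ m0⁻¹ := by
      rw [← one_div, le_div_iff₀ hm0pos]
      nlinarith [sq_nonneg (f x), hpi x]
    calc ‖f x‖ = Real.sqrt (f x ^ 2) := by
          rw [Real.sqrt_sq_eq_abs, Real.norm_eq_abs]
      _ ≤ Real.sqrt m0⁻¹ := Real.sqrt_le_sqrt hfx2
  have hcomp : IsCompact S' := Metric.isCompact_of_isClosed_isBounded hclosed hbdd
  have himgcomp : IsCompact Sp := by rw [himg]; exact hcomp.image c3
  have himgne : Sp.Nonempty := hne
  have hmem : sSup Sp ∈ Sp := himgcomp.sSup_mem himgne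
  have hc_eq : secondEig pi P = sSup Sp := rfl
  obtain ⟨f, hf1, hf2, hf3⟩ := hmem
  rcases lt_or_eq_of_le (secondEig_le_oneX P pi hP hrow hpi hpisum hrev hpsd) with h | h
  · exact h
  exfalso
  have hval : pip pi f (P.mulVec f) = 1 := by
    rw [← hf3, ← hc_eq, h]
  have hdir := dirichletX P pi hP hrow hpi hpisum hrev hpsd f
  rw [hf1, hval, sub_self] at hdir
  have hzero : ∑ x, ∑ y, pi x * P x y * (f x - f y)^2 = 0 := by linarith
  have houter : ∀ x ∈ Finset.univ, (0:ℝ) ≤ ∑ y, pi x * P x y * (f x - f y)^2 :=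
    fun x _ => Finset.sum_nonneg fun y _ => by
      have := (hpi x).le; have := hP x y; positivity
  have hinner : ∀ x y, pi x * P x y * (f x - f y)^2 = 0 := by
    intro x y
    have h2 := (Finset.sum_eq_zero_iff_of_nonneg houter).mp hzero x (Finset.mem_univ x)
    have hin : ∀ y ∈ Finset.univ, (0:ℝ) ≤ pi x * P x y * (f x - f y)^2 := fun y _ => by
      have := (hpi x).le; have := hP x y; positivity
    exact (Finset.sum_eq_zero_iff_of_nonneg hin).mp h2 y (Finset.mem_univ y)
  have hedge : ∀ x y, 0 < P x y → f x = f y := by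
    intro x y hPxy
    have h1 := hinner x y
    have h2 : (f x - f y)^2 = 0 := by
      have hpix := hpi x
      by_contra hne2
      have h10 : 0 < (f x - f y)^2 := lt_of_le_of_ne (sq_nonneg _) (Ne.symm hne2)
      nlinarith [mul_pos (mul_pos hpix hPxy) h10]
    have := sq_eq_zero_iff.mp h2
    linarith
  have hconst : ∀ x y : V, f x = f y := fun x y => by
    obtain ⟨t, ht⟩ := hirr x y
    exact eq_on_posX P pi hP hrow hpi hpisum hrev hpsd f hedge t x y ht
  obtain ⟨x0⟩ := hVne
  have hfconst : ∀ x, f x = f x0 := fun x => hconst x x0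
  have hzero2 : f x0 = 0 := by
    have h11 : ∑ x, pi x * f x = ∑ x, pi x * f x0 :=
      Finset.sum_congr rfl fun x _ => by rw [hfconst x]
    rw [hf2] at h11
    rw [← Finset.sum_mul, hpisum, one_mul] at h11
    linarith
  have h12 : pip pi f f = 0 := by
    unfold pip
    exact Finset.sum_eq_zero fun x _ => by rw [hfconst x, hzero2]; ring
  rw [hf1] at h12
  norm_num at h12

lemma pow_revX : ∀ (s : ℕ) (x y : V), pi x * (P ^ s) x y = pi y * (P ^ s) y x := by
  intro s
  induction s with
  | zero => intro x y; simp [Matrix.one_apply]; split <;> split <;> simp_all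
  | succ n ih =>
    intro x y
    have hL : (P ^ (n+1)) x y = ∑ z, (P ^ n) x z * P z y := by
      rw [pow_succ, Matrix.mul_apply]
    have hR : (P ^ (n+1)) y x = ∑ z, P y z * (P ^ n) z x := by
      rw [pow_succ', Matrix.mul_apply]
    rw [hL, hR, Finset.mul_sum, Finset.mul_sum]
    refine Finset.sum_congr rfl fun z _ => ?_
    calc pi x * ((P ^ n) x z * P z y)
        = ((pi x * (P ^ n) x z) * P z y) := by ring
      _ = ((pi z * (P ^ n) z x) * P z y) := by rw [ih]
      _ = (P ^ n) z x * (pi z * P z y) := by ring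
      _ = (P ^ n) z x * (pi y * P y z) := by rw [hrev]
      _ = pi y * (P y z * (P ^ n) z x) := by ring

lemma pow_rowsumX : ∀ (s : ℕ) (x : V), ∑ y, (P ^ s) x y = 1 := by
  intro s
  induction s with
  | zero => intro x; simp [Matrix.one_apply]
  | succ n ih =>
    intro x
    simp only [pow_succ', Matrix.mul_apply]
    rw [Finset.sum_comm]
    calc ∑ z, ∑ y, P x z * (P ^ n) z y = ∑ z, P x z * ∑ y, (P ^ n) z y := by
          exact Finset.sum_congr rfl fun z _ => by rw [Finset.mul_sum]
      _ = ∑ z, P x z := by exact Finset.sum_congr rfl fun z _ => by rw [ih z, mul_one]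
      _ = 1 := hrow x

lemma iter_mean_zeroX (f : V → ℝ) (hmean : ∑ x, pi x * f x = 0) :
    ∀ r : ℕ, ∑ x, pi x * ((P ^ r).mulVec f) x = 0 := by
  intro r
  induction r with
  | zero => simpa [Matrix.one_mulVec] using hmean
  | succ n ih =>
    have hsplit : (P ^ (n+1)).mulVec f = P.mulVec ((P ^ n).mulVec f) := by
      rw [Matrix.mulVec_mulVec, ← pow_succ']
    rw [hsplit, stationaryX P pi hrev hrow]
    exact ih

lemma pow_rev_symmX (s : ℕ) (f g : V → ℝ) :
    pip pi f ((P ^ s).mulVec g) = pip pi g ((P ^ s).mulVec f) :=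
  pipP_symmX (P ^ s) pi (pow_revX P pi hP hrow hpi hpisum hrev hpsd s) f g

lemma b_evenX (f : V → ℝ) (r : ℕ) :
    pip pi f ((P ^ (r + r)).mulVec f)
      = pip pi ((P ^ r).mulVec f) ((P ^ r).mulVec f) := by
  have h1 : (P ^ (r + r)).mulVec f = (P ^ r).mulVec ((P ^ r).mulVec f) := by
    rw [Matrix.mulVec_mulVec, ← pow_add]
  rw [h1, pow_rev_symmX P pi hP hrow hpi hpisum hrev hpsd r]

lemma b_oddX (f : V → ℝ) (r : ℕ) :
    pip pi f ((P ^ (r + r + 1)).mulVec f)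
      = pip pi ((P ^ r).mulVec f) (P.mulVec ((P ^ r).mulVec f)) := by
  have h1 : (P ^ (r + r + 1)).mulVec f
      = (P ^ r).mulVec (P.mulVec ((P ^ r).mulVec f)) := by
    rw [Matrix.mulVec_mulVec, Matrix.mulVec_mulVec, ← pow_succ, ← pow_add,
      show r + 1 + r = r + r + 1 by ring]
  rw [h1, pow_rev_symmX P pi hP hrow hpi hpisum hrev hpsd r, Matrix.mulVec_mulVec,
    ← pow_succ', pow_succ', ← Matrix.mulVec_mulVec]
  exact pip_commX pi _ _

lemma b_nonnegX (f : V → ℝ) : ∀ s : ℕ, 0 ≤ pip pi f ((P ^ s).mulVec f) := by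
  intro s
  rcases Nat.even_or_odd s with ⟨r, hr⟩ | ⟨r, hr⟩
  · rw [hr, b_evenX P pi hP hrow hpi hpisum hrev hpsd]
    exact pip_nonnegX pi hpi _
  · rw [hr, show 2 * r + 1 = r + r + 1 by ring, b_oddX P pi hP hrow hpi hpisum hrev hpsd]
    exact hpsd _

lemma b_stepX (f : V → ℝ) (hmean : ∑ x, pi x * f x = 0) (s : ℕ) :
    pip pi f ((P ^ (s + 1)).mulVec f)
      ≤ secondEig pi P * pip pi f ((P ^ s).mulVec f) := by
  rcases Nat.even_or_odd s with ⟨r, hr⟩ | ⟨r, hr⟩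
  · rw [hr, b_evenX P pi hP hrow hpi hpisum hrev hpsd,
      show r + r + 1 = r + r + 1 from rfl, b_oddX P pi hP hrow hpi hpisum hrev hpsd]
    exact rayleighX P pi hP hrow hpi hpisum hrev hpsd _
      (iter_mean_zeroX P pi hP hrow hpi hpisum hrev hpsd f hmean r)
  · rw [hr, show 2 * r + 1 = r + r + 1 by ring, b_oddX P pi hP hrow hpi hpisum hrev hpsd,
      show r + r + 1 + 1 = (r+1) + (r+1) by ring, b_evenX P pi hP hrow hpi hpisum hrev hpsd]
    set g := (P ^ r).mulVec f with hg
    set w := P.mulVec g with hw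
    have hwu : (P ^ (r+1)).mulVec f = w := by
      rw [hw, hg, Matrix.mulVec_mulVec, ← pow_succ']
    rw [hwu]
    set N := pip pi w w with hN
    have hNnn : 0 ≤ N := pip_nonnegX pi hpi w
    have hwmean : ∑ x, pi x * w x = 0 := by
      rw [← hwu]
      exact iter_mean_zeroX P pi hP hrow hpi hpisum hrev hpsd f hmean (r+1)
    have hcs := pipP_csX P pi hP hrow hpi hpisum hrev hpsd g w
    have hray := rayleighX P pi hP hrow hpi hpisum hrev hpsd w hwmean
    have hgw : pip pi g (P.mulVec w) = N := by
      rw [pipP_symmX P pi hrev g w, ← hw, ← hN]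
    rw [hgw] at hcs
    have hb1nn : 0 ≤ pip pi g (P.mulVec g) := hpsd g
    rcases eq_or_lt_of_le hNnn with h0 | h0
    · rw [← h0]
      exact mul_nonneg (secondEig_nonnegX P pi hP hrow hpi hpisum hrev hpsd) hb1nn
    · nlinarith [hcs, hray, h0]

lemma b_decayX (f : V → ℝ) (hmean : ∑ x, pi x * f x = 0) (s k : ℕ) :
    pip pi f ((P ^ (s + k)).mulVec f)
      ≤ (secondEig pi P) ^ k * pip pi f ((P ^ s).mulVec f) := by
  induction k with
  | zero => simp
  | succ n ih =>
    have h1 := b_stepX P pi hP hrow hpi hpisum hrev hpsd f hmean (s + n)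
    have hc := secondEig_nonnegX P pi hP hrow hpi hpisum hrev hpsd
    calc pip pi f ((P ^ (s + (n+1))).mulVec f)
        = pip pi f ((P ^ (s + n + 1)).mulVec f) := by ring_nf
      _ ≤ secondEig pi P * pip pi f ((P ^ (s + n)).mulVec f) := h1
      _ ≤ secondEig pi P * ((secondEig pi P) ^ n * pip pi f ((P ^ s).mulVec f)) :=
          mul_le_mul_of_nonneg_left ih hc
      _ = (secondEig pi P) ^ (n+1) * pip pi f ((P ^ s).mulVec f) := by ring

lemma phi_meanX (x : V) :
    ∑ y, pi y * ((fun y => (if y = x then (pi x)⁻¹ else 0) - 1) y) = 0 := by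
  have h1 : ∀ y, pi y * ((if y = x then (pi x)⁻¹ else 0) - 1)
      = (if y = x then pi y * (pi x)⁻¹ else 0) - pi y := by
    intro y; by_cases h : y = x <;> simp [h] <;> ring
  simp only [h1, Finset.sum_sub_distrib, Finset.sum_ite_eq', Finset.mem_univ, if_true, hpisum]
  rw [mul_inv_cancel₀ (hpi x).ne']
  ring

lemma b_diagX (x : V) (s : ℕ) :
    pip pi (fun y => (if y = x then (pi x)⁻¹ else 0) - 1)
      ((P ^ s).mulVec (fun y => (if y = x then (pi x)⁻¹ else 0) - 1))
      = (P ^ s) x x * (pi x)⁻¹ - 1 := by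
  set M := P ^ s with hM
  set φ : V → ℝ := fun y => (if y = x then (pi x)⁻¹ else 0) - 1 with hφ
  have hM1 := pow_rowsumX P pi hP hrow hpi hpisum hrev hpsd s
  have hMrev := pow_revX P pi hP hrow hpi hpisum hrev hpsd s
  have hmv : ∀ y, (M.mulVec φ) y = M y x * (pi x)⁻¹ - 1 := by
    intro y
    show ∑ z, M y z * φ z = M y x * (pi x)⁻¹ - 1
    have h1 : ∀ z, M y z * φ z = (if z = x then M y z * (pi x)⁻¹ else 0) - M y z := by
      intro z; by_cases h : z = x <;> simp [hφ, h] <;> ring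
    simp only [h1, Finset.sum_sub_distrib, Finset.sum_ite_eq', Finset.mem_univ, if_true, hM1 y]
    exact congrArg (M y x * (pi x)⁻¹ - ·) (hM1 y)
  unfold pip
  have h2 : ∀ y, pi y * φ y * (M.mulVec φ) y
      = (if y = x then pi y * (pi x)⁻¹ * (M y x * (pi x)⁻¹ - 1) else 0)
        - pi y * (M y x * (pi x)⁻¹ - 1) := by
    intro y
    rw [hmv y]
    by_cases h : y = x <;> simp [hφ, h] <;> ring
  simp only [h2, Finset.sum_sub_distrib, Finset.sum_ite_eq', Finset.mem_univ, if_true]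
  have h3 : ∑ y, pi y * (M y x * (pi x)⁻¹ - 1)
      = (∑ y, pi y * M y x) * (pi x)⁻¹ - 1 := by
    have hterm : ∀ y, pi y * (M y x * (pi x)⁻¹ - 1)
        = pi y * M y x * (pi x)⁻¹ - pi y := fun y => by ring
    rw [Finset.sum_congr rfl fun y _ => hterm y, Finset.sum_sub_distrib, hpisum,
      Finset.sum_mul]
  have h4 : ∑ y, pi y * M y x = pi x := by
    calc ∑ y, pi y * M y x = ∑ y, pi x * M x y :=
          Finset.sum_congr rfl fun y _ => hMrev y x
      _ = pi x * ∑ y, M x y := by rw [Finset.mul_sum]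
      _ = pi x := by rw [hM1 x, mul_one]
  rw [h3, h4, mul_inv_cancel₀ (hpi x).ne']
  ring

end MyMain

theorem stmt3 [Fintype V] [DecidableEq V] (P : Matrix V V ℝ) (pi : V → ℝ)
    (hP : ∀ x y, 0 ≤ P x y) (hrow : ∀ x, ∑ y, P x y = 1)
    (hpi : ∀ x, 0 < pi x) (hpisum : ∑ x, pi x = 1)
    (hrev : ∀ x y, pi x * P x y = pi y * P y x)
    (hirr : ∀ x y, ∃ t : ℕ, 0 < (P ^ t) x y)
    (hpsd : ∀ f : V → ℝ, 0 ≤ pip pi f (P.mulVec f)) :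
    ∀ (x : V) (t : ℕ),
      (∑ s ∈ Finset.range (t+1), (P ^ s) x x) - (t+1) * pi x ≤
        (Real.exp 1 / (Real.exp 1 - 1)) *
          ∑ s ∈ Finset.range (min (⌈trelT pi P⌉₊ - 1) t + 1), (P ^ s) x x := by
  intro x t
  set c := secondEig pi P with hc
  have hc0 : 0 ≤ c := secondEig_nonnegX P pi hP hrow hpi hpisum hrev hpsd
  have hc1 : c < 1 := secondEig_lt_oneX P pi hP hrow hpi hpisum hrev hpsd hirr
  have hgap : 0 < 1 - c := by linarith
  set T : ℝ := trelT pi P with hT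
  have hTval : T = 1 / (1 - c) := rfl
  have hT1 : 1 ≤ T := by
    rw [hTval, le_div_iff₀ hgap]; linarith
  have hT0 : 0 < T := lt_of_lt_of_le zero_lt_one hT1
  set M : ℕ := ⌈T⌉₊ with hMdef
  have hM1 : 1 ≤ M := Nat.one_le_iff_ne_zero.mpr (by
    intro h
    have := Nat.le_ceil T
    rw [← hMdef, h] at this
    norm_num at this
    linarith)
  have hMT : T ≤ (M : ℝ) := Nat.le_ceil T
  set K : ℝ := Real.exp 1 / (Real.exp 1 - 1) with hK
  have he2 : (2:ℝ) ≤ Real.exp 1 := by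
    have := Real.add_one_le_exp 1; linarith
  have he1 : (0:ℝ) < Real.exp 1 - 1 := by linarith
  have hK1 : 1 ≤ K := by rw [hK, le_div_iff₀ he1]; linarith
  have hK0 : 0 ≤ K := by linarith
  -- the b sequence
  set φ : V → ℝ := fun y => (if y = x then (pi x)⁻¹ else 0) - 1 with hφ
  set b : ℕ → ℝ := fun s => pip pi φ ((P ^ s).mulVec φ) with hb
  have hbd : ∀ s, b s = (P ^ s) x x * (pi x)⁻¹ - 1 := fun s =>
    b_diagX P pi hP hrow hpi hpisum hrev hpsd x s
  have hb0 : ∀ s, 0 ≤ b s := fun s => b_nonnegX P pi hP hrow hpi hpisum hrev hpsd φ s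
  have hmean : ∑ y, pi y * φ y = 0 := phi_meanX P pi hP hrow hpi hpisum hrev hpsd x
  have ha : ∀ s, pi x * b s = (P ^ s) x x - pi x := by
    intro s
    rw [hbd s, mul_sub, mul_one, mul_comm (pi x) _, inv_mul_cancel_right₀ (hpi x).ne']
  have haP : ∀ s, pi x * b s ≤ (P ^ s) x x := by
    intro s; rw [ha s]; linarith [(hpi x).le]
  -- LHS rewrite
  have hLHS : (∑ s ∈ Finset.range (t+1), (P ^ s) x x) - (t+1) * pi x
      = ∑ s ∈ Finset.range (t+1), pi x * b s := by
    have e1 : ∑ s ∈ Finset.range (t+1), pi x * b s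
        = ∑ s ∈ Finset.range (t+1), ((P ^ s) x x - pi x) :=
      Finset.sum_congr rfl fun s _ => ha s
    rw [e1, Finset.sum_sub_distrib, Finset.sum_const, Finset.card_range, nsmul_eq_mul]
    push_cast
    ring
  rw [hLHS]
  by_cases hcase : t ≤ M - 1
  · -- easy case: min = t
    have hmin : min (M - 1) t = t := min_eq_right hcase
    rw [hMdef] at hmin
    rw [hmin]
    have h1 : ∑ s ∈ Finset.range (t+1), pi x * b s
        ≤ ∑ s ∈ Finset.range (t+1), (P ^ s) x x :=
      Finset.sum_le_sum fun s _ => haP s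
    have h2 : 0 ≤ ∑ s ∈ Finset.range (t+1), (P ^ s) x x :=
      Finset.sum_nonneg fun s _ => pow_entry_nonnegX P pi hP hrow hpi hpisum hrev hpsd s x x
    calc ∑ s ∈ Finset.range (t+1), pi x * b s
        ≤ ∑ s ∈ Finset.range (t+1), (P ^ s) x x := h1
      _ ≤ K * ∑ s ∈ Finset.range (t+1), (P ^ s) x x := le_mul_of_one_le_left h2 hK1
  · -- main case
    have hmin : min (M - 1) t = M - 1 := min_eq_left (le_of_not_ge hcase)
    have hM1' : M - 1 + 1 = M := Nat.succ_pred_eq_of_pos hM1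
    rw [hMdef] at hmin
    rw [hmin, hM1']
    -- decay bound
    set q : ℝ := c ^ M with hq
    have hqe : q ≤ Real.exp (-1) := by
      have h1 : c ≤ Real.exp (-(1/T)) := by
        have := Real.add_one_le_exp (-(1/T))
        have h2 : (1:ℝ)/T = 1 - c := by
          rw [hTval, one_div_one_div]
        linarith
      have h3 : q ≤ (Real.exp (-(1/T))) ^ M := pow_le_pow_left₀ hc0 h1 M
      have h4 : (Real.exp (-(1/T))) ^ M = Real.exp ((M:ℝ) * (-(1/T))) := by
        rw [Real.exp_nat_mul]
      rw [h4] at h3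
      refine h3.trans (Real.exp_le_exp.mpr ?_)
      have h5 : (1:ℝ) ≤ (M:ℝ) / T := by rw [le_div_iff₀ hT0]; linarith
      have h6 : (M:ℝ) * -(1/T) = -((M:ℝ)/T) := by ring
      rw [h6]; linarith
    have hqlt1 : q < 1 := lt_of_le_of_lt hqe (by
      rw [← Real.exp_zero]
      exact Real.exp_lt_exp.mpr (by norm_num))
    have hq0 : 0 ≤ q := pow_nonneg hc0 M
    set S : ℝ := ∑ i ∈ Finset.range M, b i with hS
    have hS0 : 0 ≤ S := Finset.sum_nonneg fun i _ => hb0 i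
    have hblock : ∀ n, ∑ s ∈ Finset.range (n * M), b s
        ≤ (∑ j ∈ Finset.range n, q ^ j) * S := by
      intro n
      induction n with
      | zero => simp
      | succ n ih =>
        have h1 : (n+1) * M = n * M + M := by ring
        rw [h1, Finset.sum_range_add]
        have h2 : ∀ i, b (n*M + i) ≤ q ^ n * b i := by
          intro i
          have hd := b_decayX P pi hP hrow hpi hpisum hrev hpsd φ hmean i (n*M)
          rw [show i + n*M = n*M + i by ring] at hd
          have hpow : c ^ (n*M) = q ^ n := by
            rw [hq, ← pow_mul, mul_comm]
          rw [hpow] at hd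
          exact hd
        calc (∑ s ∈ Finset.range (n*M), b s) + ∑ i ∈ Finset.range M, b (n*M + i)
            ≤ (∑ j ∈ Finset.range n, q ^ j) * S + ∑ i ∈ Finset.range M, q ^ n * b i :=
              add_le_add ih (Finset.sum_le_sum fun i _ => h2 i)
          _ = (∑ j ∈ Finset.range n, q ^ j) * S + q ^ n * S := by
              rw [hS, ← Finset.mul_sum]
          _ = (∑ j ∈ Finset.range (n+1), q ^ j) * S := by
              rw [Finset.sum_range_succ]; ring
    have hMpos : 0 < M := hM1
    have hsub : ∑ s ∈ Finset.range (t+1), b s ≤ ∑ s ∈ Finset.range ((t+1)*M), b s :=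
      Finset.sum_le_sum_of_subset_of_nonneg
        (Finset.range_subset_range.mpr (Nat.le_mul_of_pos_right _ hMpos))
        fun i _ _ => hb0 i
    have hgeo : ∑ j ∈ Finset.range (t+1), q ^ j ≤ K := by
      have hgm := geom_sum_mul q (t+1)
      have h1q : 0 < 1 - q := by linarith
      have hqn : 0 ≤ q ^ (t+1) := pow_nonneg hq0 _
      have hG : (∑ j ∈ Finset.range (t+1), q ^ j) * (1 - q) ≤ 1 := by nlinarith [hgm]
      have hGle : ∑ j ∈ Finset.range (t+1), q ^ j ≤ 1 / (1 - q) := by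
        rw [le_div_iff₀ h1q]; exact hG
      refine hGle.trans ?_
      have hexp0 : Real.exp 1 ≠ 0 := (Real.exp_pos 1).ne'
      have hKalt : K = 1 / (1 - Real.exp (-1)) := by
        rw [hK, Real.exp_neg]
        rw [show (1 - (Real.exp 1)⁻¹) = (Real.exp 1 - 1)/Real.exp 1 by field_simp]
        rw [one_div_div]
      have hexplt : Real.exp (-1) < 1 := by
        rw [← Real.exp_zero]
        exact Real.exp_lt_exp.mpr (by norm_num)
      have h2' : 0 < 1 - Real.exp (-1) := by linarith
      rw [hKalt]
      exact one_div_le_one_div_of_le h2' (by linarith)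
    calc ∑ s ∈ Finset.range (t+1), pi x * b s
        = pi x * ∑ s ∈ Finset.range (t+1), b s := by rw [Finset.mul_sum]
      _ ≤ pi x * ((∑ j ∈ Finset.range (t+1), q ^ j) * S) :=
          mul_le_mul_of_nonneg_left (hsub.trans (hblock (t+1))) (hpi x).le
      _ ≤ pi x * (K * S) :=
          mul_le_mul_of_nonneg_left (mul_le_mul_of_nonneg_right hgeo hS0) (hpi x).le
      _ = K * ∑ i ∈ Finset.range M, pi x * b i := by
          rw [show (∑ i ∈ Finset.range M, pi x * b i) = pi x * S by
            rw [hS, Finset.mul_sum]]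
          ring
      _ ≤ K * ∑ i ∈ Finset.range M, (P ^ i) x x :=
          mul_le_mul_of_nonneg_left (Finset.sum_le_sum fun i _ => haP i) hK0
end

section
/- For a reversible irreducible finite Markov chain with nonnegative spectrum, for any states x and for t = ⌈t_rel⌉ − 1, the partial Green's function satisfies g_t(x,x) − (t+1)π(x) ≥ (1 − e^{−1}) Σ_{i=2}^n ⟨Ψ_i, f⟩²/(1 − λ_i), where f ∈ ℝ^V satisfies P^s(x,x) − π(x) = Σ_{i=2}^n λ_i^s ⟨Ψ_i, f⟩² for all s, and {Ψ_i} is an orthonormal eigenbasis. -/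
open Finset

variable {V : Type*}

lemma pow_ceil_le_exp_inv (a : ℝ) (h0 : 0 ≤ a) (h1 : a < 1) :
    a ^ ⌈1 / (1 - a)⌉₊ ≤ (Real.exp 1)⁻¹ := by
  have hden : 0 < 1 - a := by linarith
  have hT1 : 1 ≤ ⌈1 / (1 - a)⌉₊ := Nat.one_le_iff_ne_zero.mpr (by
    simp only [ne_eq, Nat.ceil_eq_zero, not_le]
    positivity)
  rcases eq_or_lt_of_le h0 with h | h
  · rw [← h]; rw [zero_pow (by norm_num)]
    positivity
  · set T := ⌈1 / (1 - a)⌉₊ with hT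
    have hTc : (1 / (1 - a) : ℝ) ≤ T := Nat.le_ceil _
    have hlog : Real.log a ≤ a - 1 := Real.log_le_sub_one_of_pos h
    have hlogneg : Real.log a < 0 := Real.log_neg h h1
    have h2 : (T : ℝ) * Real.log a ≤ (1 / (1 - a)) * Real.log a :=
      mul_le_mul_of_nonpos_right hTc (le_of_lt hlogneg)
    have h3 : (1 / (1 - a)) * Real.log a ≤ -1 := by
      have := mul_le_mul_of_nonneg_left hlog (le_of_lt (by positivity : (0:ℝ) < 1 / (1 - a)))
      calc (1 / (1 - a)) * Real.log a ≤ (1 / (1 - a)) * (a - 1) := this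
        _ = -1 := by field_simp; ring
    have hpow : a ^ T = Real.exp ((T : ℝ) * Real.log a) := by
      rw [← Real.log_pow, Real.exp_log (by positivity)]
    rw [hpow, ← Real.exp_neg]
    exact Real.exp_le_exp.mpr (by linarith)

theorem stmt4 [Fintype V] [DecidableEq V] (P : Matrix V V ℝ) (pi : V → ℝ)
    (hP : ∀ x y, 0 ≤ P x y) (hrow : ∀ x, ∑ y, P x y = 1)
    (hpi : ∀ x, 0 < pi x) (hpisum : ∑ x, pi x = 1)
    (hrev : ∀ x y, pi x * P x y = pi y * P y x)
    (hirr : ∀ x y, ∃ t : ℕ, 0 < (P ^ t) x y)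
    (hpsd : ∀ f : V → ℝ, 0 ≤ pip pi f (P.mulVec f))
    (hn : 2 ≤ Fintype.card V) (x : V) (f : V → ℝ)
    (l : Fin (Fintype.card V) → ℝ) (Ψ : Fin (Fintype.card V) → V → ℝ)
    (heig : ∀ i, P.mulVec (Ψ i) = l i • Ψ i)
    (horth : ∀ i j, pip pi (Ψ i) (Ψ j) = if i = j then 1 else 0)
    (hmono : ∀ i j, i ≤ j → l j ≤ l i)
    (hl0 : ∀ i : Fin (Fintype.card V), i.val = 0 → l i = 1)
    (hl1 : ∀ i : Fin (Fintype.card V), i.val = 1 → l i < 1)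
    (hnn : ∀ i, 0 ≤ l i)
    (hf : ∀ s : ℕ, (P ^ s) x x - pi x =
      ∑ i : Fin (Fintype.card V), if i.val ≠ 0 then l i ^ s * (pip pi (Ψ i) f) ^ 2 else 0) :
    ∀ i2 : Fin (Fintype.card V), i2.val = 1 →
      (∑ s ∈ Finset.range ((⌈1 / (1 - l i2)⌉₊ - 1) + 1), (P ^ s) x x) -
          (((⌈1 / (1 - l i2)⌉₊ - 1 : ℕ) : ℝ) + 1) * pi x ≥
        (1 - (Real.exp 1)⁻¹) *
          ∑ i : Fin (Fintype.card V), if i.val ≠ 0 then (pip pi (Ψ i) f) ^ 2 / (1 - l i) else 0 := by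
  intro i2 hi2
  have hl2lt : l i2 < 1 := hl1 i2 hi2
  have hl2nn : 0 ≤ l i2 := hnn i2
  have hden2 : 0 < 1 - l i2 := by linarith
  set T := ⌈1 / (1 - l i2)⌉₊ with hTdef
  have hT1 : 1 ≤ T := Nat.one_le_iff_ne_zero.mpr (by
    simp only [hTdef, ne_eq, Nat.ceil_eq_zero, not_le]
    positivity)
  have hTsub : (T - 1) + 1 = T := Nat.sub_add_cancel hT1
  have hcast : (((T - 1 : ℕ) : ℝ) + 1) = (T : ℝ) := by
    rw [Nat.cast_sub hT1]; push_cast; ring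
  rw [hTsub, hcast]
  have hexp : l i2 ^ T ≤ (Real.exp 1)⁻¹ := pow_ceil_le_exp_inv _ hl2nn hl2lt
  have key : (∑ s ∈ Finset.range T, (P ^ s) x x) - (T : ℝ) * pi x =
      ∑ i : Fin (Fintype.card V),
        if i.val ≠ 0 then (pip pi (Ψ i) f) ^ 2 * ∑ s ∈ Finset.range T, l i ^ s else 0 := by
    have : (∑ s ∈ Finset.range T, (P ^ s) x x) - (T : ℝ) * pi x
        = ∑ s ∈ Finset.range T, ((P ^ s) x x - pi x) := by
      rw [Finset.sum_sub_distrib, Finset.sum_const, Finset.card_range]; ring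
    rw [this]
    simp_rw [hf]
    rw [Finset.sum_comm]
    refine Finset.sum_congr rfl fun i _ => ?_
    by_cases hi : i.val ≠ 0
    · rw [if_pos hi, Finset.mul_sum]
      refine Finset.sum_congr rfl fun s _ => ?_
      rw [if_pos hi]; ring
    · rw [if_neg hi]
      exact Finset.sum_eq_zero fun s _ => if_neg hi
  rw [ge_iff_le, key, Finset.mul_sum]
  refine Finset.sum_le_sum fun i _ => ?_
  by_cases hi : i.val ≠ 0
  · rw [if_pos hi, if_pos hi]
    have hle2 : i2 ≤ i := by
      rw [Fin.le_def, hi2]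
      omega
    have hli : l i ≤ l i2 := hmono i2 i hle2
    have hlin : 0 ≤ l i := hnn i
    have hlilt : l i < 1 := lt_of_le_of_lt hli hl2lt
    have hdeni : 0 < 1 - l i := by linarith
    have hpowle : l i ^ T ≤ (Real.exp 1)⁻¹ :=
      le_trans (pow_le_pow_left₀ hlin hli T) hexp
    have hgeom : ∑ s ∈ Finset.range T, l i ^ s = (1 - l i ^ T) / (1 - l i) := by
      rw [geom_sum_eq (ne_of_lt hlilt)]
      rw [div_eq_div_iff (by linarith) (by linarith)]
      ring
    have hc : (0:ℝ) ≤ (pip pi (Ψ i) f) ^ 2 := sq_nonneg _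
    have hfrac : (1 - (Real.exp 1)⁻¹) / (1 - l i) ≤ (1 - l i ^ T) / (1 - l i) :=
      (div_le_div_iff_of_pos_right hdeni).mpr (by linarith)
    have hrw : (1 - (Real.exp 1)⁻¹) * ((pip pi (Ψ i) f) ^ 2 / (1 - l i)) =
        (pip pi (Ψ i) f) ^ 2 * ((1 - (Real.exp 1)⁻¹) / (1 - l i)) := by ring
    rw [hrw, hgeom]
    exact mul_le_mul_of_nonneg_left hfrac hc
  · rw [if_neg hi, if_neg hi, mul_zero]
end

section
/- Let P be a self-adjoint positive semidefinite operator on a finite-dimensional inner product space, and D_0, ..., D_t self-adjoint projections (D_s² = D_s). Then ‖D_0 P D_1 P D_2 ⋯ D_{t−1} P D_t‖ ≤ (max_s ‖D_s P D_s‖)^t. -/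
open Finset

variable {V : Type*}

section Aux

lemma myListProdNormLe {A : Type*} [NormedRing A] (h1 : ‖(1:A)‖ ≤ 1) (M : ℝ) (hM : 0 ≤ M) :
    ∀ l : List A, (∀ a ∈ l, ‖a‖ ≤ M) → ‖l.prod‖ ≤ M ^ l.length := by
  intro l
  induction l with
  | nil => intro _; simpa using h1
  | cons a l ih =>
    intro h
    simp only [List.prod_cons, List.length_cons]
    calc ‖a * l.prod‖ ≤ ‖a‖ * ‖l.prod‖ := norm_mul_le _ _
      _ ≤ M * M ^ l.length := by
          exact mul_le_mul (h a (by simp)) (ih fun x hx => h x (by simp [hx]))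
            (norm_nonneg _) hM
      _ = M ^ (l.length + 1) := by ring

lemma myListSwap {A : Type*} [Ring A] (P Q : A) (hQQ : Q * Q = P) :
    ∀ l : List A, (l.map (fun d => P * d)).prod * Q = Q * (l.map (fun d => Q * d * Q)).prod := by
  intro l
  induction l with
  | nil => simp
  | cons a l ih =>
    simp only [List.map_cons, List.prod_cons]
    rw [mul_assoc, ih, ← hQQ]
    noncomm_ring

lemma myHeadSplit {A : Type*} [Ring A] (P : A) (d0 : A) (l : List A) :
    ((d0 :: l).map (fun d => d * P)).prod = d0 * (l.map (fun d => P * d)).prod * P := by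
  induction l generalizing d0 with
  | nil => simp
  | cons a l ih =>
    rw [List.map_cons, List.prod_cons, ih a, List.map_cons, List.prod_cons]
    noncomm_ring

lemma myExistsSqrt {F : Type*} [NormedAddCommGroup F] [InnerProductSpace ℝ F]
    [FiniteDimensional ℝ F] (P : F →L[ℝ] F)
    (hPsa : ∀ v w : F, (inner ℝ (P v) w : ℝ) = inner ℝ v (P w))
    (hPpsd : ∀ v : F, 0 ≤ (inner ℝ v (P v) : ℝ)) :
    ∃ Q : F →L[ℝ] F, star Q = Q ∧ Q * Q = P := by
  have hPsym : (P : F →ₗ[ℝ] F).IsSymmetric := fun v w => hPsa v w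
  set n := Module.finrank ℝ F with hn
  let b : OrthonormalBasis (Fin n) ℝ F := hPsym.eigenvectorBasis rfl
  let μ : Fin n → ℝ := hPsym.eigenvalues rfl
  have hPb : ∀ i, P (b i) = μ i • b i := fun i => hPsym.apply_eigenvectorBasis rfl i
  have hbb : ∀ i j, (inner ℝ (b i) (b j) : ℝ) = if i = j then 1 else 0 := by
    intro i j
    have := b.orthonormal
    rw [orthonormal_iff_ite] at this
    exact this i j
  have hμ : ∀ i, 0 ≤ μ i := by
    intro i
    have h := hPpsd (b i)
    rw [hPb i, real_inner_smul_right, hbb i i] at h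
    simpa using h
  set Q : F →L[ℝ] F := ∑ i, Real.sqrt (μ i) • ((innerSL ℝ (b i)).smulRight (b i)) with hQ
  have hQapp : ∀ v, Q v = ∑ i, (Real.sqrt (μ i) * inner ℝ (b i) v) • b i := by
    intro v
    simp [hQ, ContinuousLinearMap.sum_apply, smul_smul]
  have hQb : ∀ j, Q (b j) = Real.sqrt (μ j) • b j := by
    intro j
    rw [hQapp]
    rw [Finset.sum_eq_single j]
    · rw [hbb j j]; simp
    · intro i _ hij; rw [hbb i j, if_neg hij]; simp
    · simp
  have hQsym : (Q : F →ₗ[ℝ] F).IsSymmetric := by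
    intro v w
    simp only [ContinuousLinearMap.coe_coe, hQapp, inner_sum, sum_inner,
      real_inner_smul_left, real_inner_smul_right]
    refine Finset.sum_congr rfl fun i _ => ?_
    rw [real_inner_comm v (b i)]
    ring
  refine ⟨Q, ?_, ?_⟩
  · exact ContinuousLinearMap.isSelfAdjoint_iff_isSymmetric.mpr hQsym
  · apply ContinuousLinearMap.coe_injective
    apply b.toBasis.ext
    intro j
    simp only [OrthonormalBasis.coe_toBasis, ContinuousLinearMap.coe_coe]
    show (Q * Q) (b j) = P (b j)
    rw [ContinuousLinearMap.mul_apply, hQb, map_smul, hQb, smul_smul,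
      Real.mul_self_sqrt (hμ j), hPb]

end Aux

theorem stmt10 {F : Type*} [NormedAddCommGroup F] [InnerProductSpace ℝ F]
    [FiniteDimensional ℝ F] (t : ℕ) (P : F →L[ℝ] F) (D : Fin (t+1) → F →L[ℝ] F)
    (hPsa : ∀ v w : F, (inner ℝ (P v) w : ℝ) = inner ℝ v (P w))
    (hPpsd : ∀ v : F, 0 ≤ (inner ℝ v (P v) : ℝ))
    (hDsa : ∀ (s) (v w : F), (inner ℝ (D s v) w : ℝ) = inner ℝ v (D s w))
    (hDidem : ∀ s, D s * D s = D s) :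
    ‖(List.ofFn fun s : Fin t => D s.castSucc * P).prod * D (Fin.last t)‖ ≤
      (⨆ s : Fin (t+1), ‖D s * P * D s‖) ^ t := by
  have hstarD : ∀ s, star (D s) = D s := fun s =>
    ContinuousLinearMap.isSelfAdjoint_iff_isSymmetric.mpr (fun v w => hDsa s v w)
  obtain _ | k := t
  · -- t = 0
    have h : ‖D (Fin.last 0)‖ * ‖D (Fin.last 0)‖ = ‖D (Fin.last 0)‖ := by
      rw [← CStarRing.norm_star_mul_self, hstarD, hDidem]
    simp only [List.ofFn_zero, List.prod_nil, one_mul, pow_zero]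
    nlinarith [norm_nonneg (D (Fin.last 0))]
  · set M := ⨆ s : Fin (k+1+1), ‖D s * P * D s‖ with hM
    have hDPDle : ∀ s, ‖D s * P * D s‖ ≤ M := fun s =>
      le_ciSup (f := fun s : Fin (k+1+1) => ‖D s * P * D s‖) (Set.finite_range _).bddAbove s
    have hM0 : 0 ≤ M := le_trans (norm_nonneg _) (hDPDle 0)
    obtain ⟨Q, hstarQ, hQQ⟩ := myExistsSqrt P hPsa hPpsd
    have hQD : ∀ s, ‖Q * D s‖ * ‖Q * D s‖ = ‖D s * P * D s‖ := by
      intro s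
      rw [← CStarRing.norm_star_mul_self]
      congr 1
      rw [star_mul, hstarQ, hstarD, ← hQQ]
      noncomm_ring
    have key1 : ∀ s, ‖Q * D s‖ ≤ Real.sqrt M := by
      intro s
      have h := (hQD s).le.trans (hDPDle s)
      nlinarith [Real.mul_self_sqrt hM0, Real.sqrt_nonneg M, norm_nonneg (Q * D s)]
    have key2 : ∀ s, ‖D s * Q‖ ≤ Real.sqrt M := by
      intro s
      have h : D s * Q = star (Q * D s) := by rw [star_mul, hstarQ, hstarD]
      have e2 := norm_star (Q * D s)
      rw [h, e2]
      exact key1 s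
    have key3 : ∀ s, ‖Q * D s * Q‖ ≤ M := by
      intro s
      have h : Q * D s * Q = (Q * D s) * star (Q * D s) := by
        rw [star_mul, hstarQ, hstarD s]
        conv_lhs => rw [← hDidem s]
        noncomm_ring
      have e3 := CStarRing.norm_self_mul_star (x := Q * D s)
      rw [h, e3, hQD s]
      exact hDPDle s
    set l : List (F →L[ℝ] F) := List.ofFn fun i : Fin k => D i.succ.castSucc with hl
    have hlist : (List.ofFn fun s : Fin (k+1) => D s.castSucc * P)
        = (D 0 :: l).map (fun d => d * P) := by
      rw [List.ofFn_succ]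
      simp only [hl, List.map_cons, List.map_ofFn, Fin.castSucc_zero]
      rfl
    rw [hlist, myHeadSplit]
    have hmid := myListSwap P Q hQQ l
    have hEq : D 0 * (l.map (fun d => P * d)).prod * P * D (Fin.last (k+1))
        = (D 0 * Q) * ((l.map (fun d => Q * d * Q)).prod * (Q * D (Fin.last (k+1)))) := by
      nth_rewrite 2 [← hQQ]
      have h5 : D 0 * (l.map (fun d => P * d)).prod * (Q * Q) * D (Fin.last (k+1))
          = D 0 * (((l.map (fun d => P * d)).prod * Q) * (Q * D (Fin.last (k+1)))) := by
        noncomm_ring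
      rw [h5, hmid]
      noncomm_ring
    rw [hEq]
    have h1 : ‖(1 : F →L[ℝ] F)‖ ≤ 1 := ContinuousLinearMap.norm_id_le
    have hlen : (l.map (fun d => Q * d * Q)).length = k := by simp [hl]
    have hprodle : ‖(l.map (fun d => Q * d * Q)).prod‖ ≤ M ^ k := by
      refine le_trans (myListProdNormLe h1 M hM0 _ ?_) (by rw [hlen])
      intro a ha
      obtain ⟨d, hd, rfl⟩ := List.mem_map.mp ha
      rw [hl, List.mem_ofFn] at hd
      obtain ⟨i, rfl⟩ := hd
      exact key3 _
    calc ‖(D 0 * Q) * ((l.map (fun d => Q * d * Q)).prod * (Q * D (Fin.last (k+1))))‖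
        ≤ ‖D 0 * Q‖ * (‖(l.map (fun d => Q * d * Q)).prod‖ * ‖Q * D (Fin.last (k+1))‖) :=
          le_trans (norm_mul_le _ _)
            (mul_le_mul_of_nonneg_left (norm_mul_le _ _) (norm_nonneg _))
      _ ≤ Real.sqrt M * (M ^ k * Real.sqrt M) := by
          refine mul_le_mul (key2 0) ?_ (mul_nonneg (norm_nonneg _) (norm_nonneg _)) (Real.sqrt_nonneg M)
          exact mul_le_mul hprodle (key1 _) (norm_nonneg _) (pow_nonneg hM0 k)
      _ = Real.sqrt M * Real.sqrt M * M ^ k := by ring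
      _ = M ^ (k+1) := by rw [Real.mul_self_sqrt hM0]; ring
end

section
/- For a reversible irreducible finite Markov chain with nonnegative spectrum, for any state h, the largest eigenvalue of D_h P D_h equals 1 − 1/E_{q_h}[τ_h] for some distribution q_h on V∖{h} (the quasistationary distribution); consequently ‖D_h P D_h‖ ≤ 1 − 1/t_hit. -/
open Finset

variable {V : Type*}

open Matrix

lemma dot_mulVec_left [Fintype V] (M : Matrix V V ℝ) (v w : V → ℝ) :
    (M *ᵥ v) ⬝ᵥ w = v ⬝ᵥ (Mᵀ *ᵥ w) := by
  rw [dotProduct_mulVec, Matrix.vecMul_transpose]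

lemma spectral_max [Fintype V] [DecidableEq V] [Nonempty V] (S : Matrix V V ℝ)
    (hS : S.IsHermitian) (hpsd : ∀ F : V → ℝ, 0 ≤ F ⬝ᵥ S.mulVec F) :
    ∃ μ : ℝ, 0 ≤ μ ∧
      (∀ F : V → ℝ, F ⬝ᵥ S.mulVec F ≤ μ * (F ⬝ᵥ F)) ∧
      (∀ F : V → ℝ, S.mulVec F ⬝ᵥ S.mulVec F ≤ μ^2 * (F ⬝ᵥ F)) ∧
      (∀ F : V → ℝ, F ⬝ᵥ S.mulVec F = μ * (F ⬝ᵥ F) → S.mulVec F = μ • F) ∧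
      (∃ W : V → ℝ, W ⬝ᵥ W = 1 ∧ S.mulVec W = μ • W) := by
  classical
  set U : Matrix V V ℝ := (hS.eigenvectorUnitary : Matrix V V ℝ) with hUdef
  have hUt : Uᵀ = star U := by
    rw [Matrix.star_eq_conjTranspose]; rfl
  have hU1 : star U * U = 1 := Matrix.mem_unitaryGroup_iff'.mp hS.eigenvectorUnitary.2
  have hU2 : U * star U = 1 := Matrix.mem_unitaryGroup_iff.mp hS.eigenvectorUnitary.2
  set ev := hS.eigenvalues with hevdef
  have hspec : S = U * Matrix.diagonal ev * star U := by
    have := hS.spectral_theorem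
    simpa [Function.comp] using this
  have hdiagmv : ∀ w : V → ℝ, Matrix.diagonal ev *ᵥ w = fun i => ev i * w i :=
    fun w => funext fun i => Matrix.mulVec_diagonal ev w i
  -- Parseval
  have hpars : ∀ F G : V → ℝ, (star U *ᵥ F) ⬝ᵥ (star U *ᵥ G) = F ⬝ᵥ G := by
    intro F G
    rw [dot_mulVec_left, Matrix.mulVec_mulVec]
    have h1 : (star U)ᵀ * star U = 1 := by
      rw [← hUt, Matrix.transpose_transpose, hUt, hU2]
    rw [h1, Matrix.one_mulVec]
  have hpars2 : ∀ F G : V → ℝ, (U *ᵥ F) ⬝ᵥ (U *ᵥ G) = F ⬝ᵥ G := by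
    intro F G
    rw [dot_mulVec_left, Matrix.mulVec_mulVec, hUt, hU1, Matrix.one_mulVec]
  have hUc : ∀ F : V → ℝ, U *ᵥ (star U *ᵥ F) = F := by
    intro F
    rw [Matrix.mulVec_mulVec, hU2, Matrix.one_mulVec]
  have hSF : ∀ F : V → ℝ, S *ᵥ F = U *ᵥ (fun i => ev i * (star U *ᵥ F) i) := by
    intro F
    conv_lhs => rw [hspec]
    rw [← Matrix.mulVec_mulVec, ← Matrix.mulVec_mulVec, hdiagmv]
  -- quadratic form identity
  have hquad : ∀ F : V → ℝ, F ⬝ᵥ S *ᵥ F = ∑ i, ev i * ((star U *ᵥ F) i)^2 := by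
    intro F
    rw [hSF, dotProduct_comm, dot_mulVec_left, hUt]
    simp only [dotProduct]
    exact Finset.sum_congr rfl fun i _ => by ring
  have hnorm : ∀ F : V → ℝ, F ⬝ᵥ F = ∑ i, ((star U *ᵥ F) i)^2 := by
    intro F
    rw [← hpars F F]
    simp [dotProduct, sq]
  have hSF2 : ∀ F : V → ℝ, S *ᵥ F ⬝ᵥ S *ᵥ F = ∑ i, (ev i)^2 * ((star U *ᵥ F) i)^2 := by
    intro F
    rw [hSF, hpars2]
    simp only [dotProduct]
    exact Finset.sum_congr rfl fun i _ => by ring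
  -- eigenvectors
  have hWi : ∀ i : V, (⇑(hS.eigenvectorBasis i) : V → ℝ) ⬝ᵥ ⇑(hS.eigenvectorBasis i) = 1 := by
    intro i
    have h1 : star U *ᵥ ⇑(hS.eigenvectorBasis i) = Pi.single i 1 :=
      hS.star_eigenvectorUnitary_mulVec i
    have := hpars (⇑(hS.eigenvectorBasis i)) (⇑(hS.eigenvectorBasis i))
    rw [h1] at this
    rw [← this]
    simp [dotProduct, Pi.single_apply]
  have hev_nonneg : ∀ i, 0 ≤ ev i := by
    intro i
    have h0 := hpsd (⇑(hS.eigenvectorBasis i))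
    rw [hS.mulVec_eigenvectorBasis, dotProduct_smul] at h0
    simpa [hWi i] using h0
  -- maximum eigenvalue
  obtain ⟨i0, -, hi0⟩ := Finset.exists_max_image (Finset.univ : Finset V) ev ⟨Classical.arbitrary V, Finset.mem_univ _⟩
  refine ⟨ev i0, hev_nonneg i0, ?_, ?_, ?_, ?_⟩
  · intro F
    rw [hquad, hnorm, Finset.mul_sum]
    exact Finset.sum_le_sum fun i _ =>
      mul_le_mul_of_nonneg_right (hi0 i (Finset.mem_univ i)) (sq_nonneg _)
  · intro F
    rw [hSF2, hnorm, Finset.mul_sum]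
    refine Finset.sum_le_sum fun i _ => mul_le_mul_of_nonneg_right ?_ (sq_nonneg _)
    exact pow_le_pow_left₀ (hev_nonneg i) (hi0 i (Finset.mem_univ i)) 2
  · intro F hF
    rw [hquad, hnorm, Finset.mul_sum] at hF
    have hzero : ∀ i ∈ Finset.univ, (ev i0 - ev i) * ((star U *ᵥ F) i)^2 = 0 := by
      have hsum : ∑ i, (ev i0 - ev i) * ((star U *ᵥ F) i)^2 = 0 := by
        rw [Finset.sum_congr rfl (fun i _ => by ring :
          ∀ i ∈ Finset.univ, (ev i0 - ev i) * ((star U *ᵥ F) i)^2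
            = ev i0 * ((star U *ᵥ F) i)^2 - ev i * ((star U *ᵥ F) i)^2),
          Finset.sum_sub_distrib, ← hF]
        ring
      exact fun i hi => (Finset.sum_eq_zero_iff_of_nonneg fun i _ =>
        mul_nonneg (by nlinarith [hi0 i (Finset.mem_univ i)]) (sq_nonneg _)).mp hsum i hi
    have hkey : ∀ i, ev i * (star U *ᵥ F) i = ev i0 * (star U *ᵥ F) i := by
      intro i
      have := hzero i (Finset.mem_univ i)
      rcases mul_eq_zero.mp this with hc | hc
      · nlinarith
      · have : (star U *ᵥ F) i = 0 := by nlinarith [sq_nonneg ((star U *ᵥ F) i)]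
        rw [this]; ring
    rw [hSF]
    have : (fun i => ev i * (star U *ᵥ F) i) = ev i0 • (star U *ᵥ F) := by
      funext i; rw [hkey i]; rfl
    rw [this, Matrix.mulVec_smul, hUc]
  · exact ⟨⇑(hS.eigenvectorBasis i0), hWi i0, by
      rw [hS.mulVec_eigenvectorBasis]⟩

lemma pip_smul_left [Fintype V] (pi f g : V → ℝ) (a : ℝ) :
    pip pi (a • f) g = a * pip pi f g := by
  simp only [pip, Finset.mul_sum, Pi.smul_apply, smul_eq_mul]
  exact Finset.sum_congr rfl fun x _ => by ring

lemma pip_smul_right [Fintype V] (pi f g : V → ℝ) (a : ℝ) :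
    pip pi f (a • g) = a * pip pi f g := by
  simp only [pip, Finset.mul_sum, Pi.smul_apply, smul_eq_mul]
  exact Finset.sum_congr rfl fun x _ => by ring

lemma pip_expand [Fintype V] (pi f : V → ℝ) (M : Matrix V V ℝ) (g : V → ℝ) :
    pip pi f (M *ᵥ g) = ∑ x, ∑ y, pi x * M x y * f x * g y := by
  simp only [pip, Matrix.mulVec, dotProduct, Finset.mul_sum]
  exact Finset.sum_congr rfl fun x _ => Finset.sum_congr rfl fun y _ => by ring

lemma pip_symm_of_rev [Fintype V] (pi : V → ℝ) (M : Matrix V V ℝ)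
    (hrev : ∀ x y, pi x * M x y = pi y * M y x) (f g : V → ℝ) :
    pip pi f (M *ᵥ g) = pip pi (M *ᵥ f) g := by
  rw [pip_expand]
  have : pip pi (M *ᵥ f) g = pip pi g (M *ᵥ f) := by
    simp only [pip]; exact Finset.sum_congr rfl fun x _ => by ring
  rw [this, pip_expand, Finset.sum_comm]
  exact Finset.sum_congr rfl fun x _ => Finset.sum_congr rfl fun y _ => by
    linear_combination (f y * g x) * hrev y x

lemma dirichlet_identity [Fintype V] (pi : V → ℝ) (P : Matrix V V ℝ)
    (hrow : ∀ x, ∑ y, P x y = 1) (hrev : ∀ x y, pi x * P x y = pi y * P y x) (f : V → ℝ) :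
    ∑ x, ∑ y, pi x * P x y * (f x - f y)^2 = 2 * (pip pi f f - pip pi f (P *ᵥ f)) := by
  have expand : ∀ x y, pi x * P x y * (f x - f y)^2
      = pi x * P x y * (f x)^2 + pi x * P x y * (f y)^2 - 2 * (pi x * P x y * f x * f y) := by
    intro x y; ring
  simp only [expand, Finset.sum_sub_distrib, Finset.sum_add_distrib]
  have h1 : ∑ x, ∑ y, pi x * P x y * (f x)^2 = pip pi f f := by
    simp only [pip]
    refine Finset.sum_congr rfl fun x _ => ?_
    rw [← Finset.sum_mul, ← Finset.mul_sum, hrow x]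
    ring
  have h2 : ∑ x, ∑ y, pi x * P x y * (f y)^2 = pip pi f f := by
    rw [Finset.sum_comm]
    simp only [pip]
    refine Finset.sum_congr rfl fun y _ => ?_
    have : ∀ x, pi x * P x y * (f y)^2 = pi y * P y x * (f y)^2 := fun x => by
      rw [hrev x y]
    simp only [this]
    rw [← Finset.sum_mul, ← Finset.mul_sum, hrow y]
    ring
  have h3 : ∑ x, ∑ y, 2 * (pi x * P x y * f x * f y) = 2 * pip pi f (P *ᵥ f) := by
    simp only [pip_expand, Finset.mul_sum]

  rw [h1, h2, h3]; ring

lemma const_of_irr [Fintype V] [DecidableEq V] (P : Matrix V V ℝ) (hP : ∀ x y, 0 ≤ P x y)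
    (hirr : ∀ x y, ∃ t : ℕ, 0 < (P ^ t) x y) (f : V → ℝ)
    (hf : ∀ x y, 0 < P x y → f x = f y) : ∀ x y, f x = f y := by
  have hPt : ∀ t x y, 0 ≤ (P ^ t) x y := by
    intro t
    induction t with
    | zero => intro x y; by_cases hxy : x = y <;> simp [Matrix.one_apply, hxy, pow_zero]
    | succ n ih =>
      intro x y
      rw [pow_succ, Matrix.mul_apply]
      exact Finset.sum_nonneg fun z _ => mul_nonneg (ih x z) (hP z y)
  have key : ∀ t x y, 0 < (P ^ t) x y → f x = f y := by
    intro t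
    induction t with
    | zero =>
      intro x y hxy
      by_cases hxy' : x = y
      · rw [hxy']
      · simp [pow_zero, Matrix.one_apply, hxy'] at hxy
    | succ n ih =>
      intro x y hxy
      rw [pow_succ, Matrix.mul_apply] at hxy
      obtain ⟨z, -, hz⟩ : ∃ z ∈ Finset.univ, 0 < (P ^ n) x z * P z y := by
        by_contra hc
        push_neg at hc
        have : ∑ z, (P ^ n) x z * P z y ≤ 0 :=
          Finset.sum_le_sum (fun z hz => hc z hz)  |>.trans_eq (by simp)
        linarith
      have h1 : 0 < (P ^ n) x z := by
        rcases lt_or_eq_of_le (hPt n x z) with h | h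
        · exact h
        · rw [← h] at hz; simp at hz
      have h2 : 0 < P z y := by
        rcases lt_or_eq_of_le (hP z y) with h | h
        · exact h
        · rw [← h] at hz; simp at hz
      exact (ih x z h1).trans (hf z y h2)
  intro x y
  obtain ⟨t, ht⟩ := hirr x y
  exact key t x y ht

lemma Dmat_apply_mul [Fintype V] [DecidableEq V] (h : V) (P : Matrix V V ℝ) (x y : V) :
    (Dmat h * P * Dmat h) x y = if x = h ∨ y = h then 0 else P x y := by
  rw [Dmat, Matrix.mul_diagonal, Matrix.diagonal_mul]
  by_cases hx : x = h <;> by_cases hy : y = h <;> simp [hx, hy]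

lemma Dmat_mulVec [Fintype V] [DecidableEq V] (h : V) (f : V → ℝ) :
    Dmat h *ᵥ f = fun x => if x = h then 0 else f x := by
  funext x
  rw [Dmat, Matrix.mulVec_diagonal]
  by_cases hx : x = h <;> simp [hx]

lemma survProb_nonneg [Fintype V] [DecidableEq V] (P : Matrix V V ℝ) (hP : ∀ x y, 0 ≤ P x y)
    (x y : V) (t : ℕ) : 0 ≤ survProb P x y t := by
  refine Finset.sum_nonneg fun p _ => ?_
  split_ifs
  · exact Finset.prod_nonneg fun s _ => hP _ _
  · exact le_refl 0

lemma survProb_self [Fintype V] [DecidableEq V] (P : Matrix V V ℝ) (h : V) (t : ℕ) :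
    survProb P h h t = 0 := by
  refine Finset.sum_eq_zero fun p _ => ?_
  rw [if_neg]
  rintro ⟨h1, h2⟩
  exact h2 0 h1

lemma survProb_succ [Fintype V] [DecidableEq V] (P : Matrix V V ℝ) (h y : V) (t : ℕ) :
    survProb P h y (t+1) = if y = h then 0 else ∑ z, P y z * survProb P h z t := by
  rw [survProb]
  rw [← Equiv.sum_comp (Fin.consEquiv (fun _ : Fin (t+1+1) => V))
    (fun p => if p 0 = y ∧ (∀ s, p s ≠ h) then ∏ s : Fin (t+1), P (p s.castSucc) (p s.succ) else 0)]
  rw [Fintype.sum_prod_type]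
  have key : ∀ (v : V) (p : Fin (t+1) → V),
      (if (Fin.cons v p : Fin (t+1+1) → V) 0 = y ∧ (∀ s, (Fin.cons v p : Fin (t+1+1) → V) s ≠ h) then
        ∏ s : Fin (t+1), P ((Fin.cons v p : Fin (t+1+1) → V) s.castSucc) ((Fin.cons v p : Fin (t+1+1) → V) s.succ) else 0)
      = if v = y then (if v ≠ h ∧ (∀ s, p s ≠ h) then
          P v (p 0) * ∏ s : Fin t, P (p s.castSucc) (p s.succ) else 0) else 0 := by
    intro v p
    have hcond : ((Fin.cons v p : Fin (t+1+1) → V) 0 = y ∧ ∀ s, (Fin.cons v p : Fin (t+1+1) → V) s ≠ h)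
        ↔ (v = y ∧ (v ≠ h ∧ ∀ s, p s ≠ h)) := by
      rw [Fin.forall_fin_succ]
      simp only [Fin.cons_zero, Fin.cons_succ]
    have hprod : ∏ s : Fin (t+1), P ((Fin.cons v p : Fin (t+1+1) → V) s.castSucc) ((Fin.cons v p : Fin (t+1+1) → V) s.succ)
        = P v (p 0) * ∏ s : Fin t, P (p s.castSucc) (p s.succ) := by
      rw [Fin.prod_univ_succ]
      simp only [Fin.castSucc_zero, Fin.cons_zero, Fin.cons_succ, ← Fin.succ_castSucc]
    rw [if_congr hcond hprod rfl, ite_and]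
  simp only [Fin.consEquiv_apply, key]
  rw [Finset.sum_comm]
  simp only [Finset.sum_ite_eq', Finset.mem_univ, if_true]
  by_cases hy : y = h
  · simp [hy]
  · rw [if_neg hy]
    have inner : ∀ p : Fin (t+1) → V,
        (if y ≠ h ∧ (∀ s, p s ≠ h) then
          P y (p 0) * ∏ s : Fin t, P (p s.castSucc) (p s.succ) else 0)
        = ∑ z, if z = p 0 then (if (p 0 = z ∧ ∀ s, p s ≠ h) then
            P y z * ∏ s : Fin t, P (p s.castSucc) (p s.succ) else 0) else 0 := by
      intro p
      rw [Finset.sum_ite_eq' Finset.univ (p 0)]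
      simp [hy]
    simp only [inner]
    rw [Finset.sum_comm]
    refine Finset.sum_congr rfl fun z _ => ?_
    rw [survProb, Finset.mul_sum]
    refine Finset.sum_congr rfl fun p _ => ?_
    by_cases hz : z = p 0
    · rw [if_pos hz, mul_ite, mul_zero]
    · rw [if_neg hz, mul_ite, mul_zero, if_neg (fun hc => hz hc.1.symm)]

lemma Pdiag_pos [Fintype V] [DecidableEq V] (P : Matrix V V ℝ) (pi : V → ℝ)
    (hP : ∀ x y, 0 ≤ P x y) (hrow : ∀ x, ∑ y, P x y = 1) (hpi : ∀ x, 0 < pi x)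
    (hrev : ∀ x y, pi x * P x y = pi y * P y x)
    (hpsd : ∀ f : V → ℝ, 0 ≤ pip pi f (P.mulVec f)) (x : V) : 0 < P x x := by
  rcases (hP x x).lt_or_eq with hlt | heq
  · exact hlt
  exfalso
  have hxx : P x x = 0 := heq.symm
  obtain ⟨y, hy⟩ : ∃ y, 0 < P x y := by
    by_contra hc
    push_neg at hc
    have : ∑ y, P x y ≤ 0 := Finset.sum_nonpos fun y _ => hc y
    rw [hrow x] at this; linarith
  have hyx : y ≠ x := fun he => by rw [he, hxx] at hy; exact lt_irrefl 0 hy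
  set b := pi x * P x y with hbdef
  set cc := pi y * P y y with hccdef
  have hb : 0 < b := mul_pos (hpi x) hy
  have hcc : 0 ≤ cc := mul_nonneg (hpi y).le (hP y y)
  set s : ℝ := -(b / (cc + b)) with hsdef
  set f : V → ℝ := fun z => (if z = x then 1 else 0) + s * (if z = y then 1 else 0) with hfdef
  have hxy : x ≠ y := Ne.symm hyx
  have hmv : ∀ z, (P.mulVec f) z = P z x + s * P z y := by
    intro z
    have hterm : ∀ w, P z w * f w
        = (if w = x then P z x else 0) + s * (if w = y then P z y else 0) := by
      intro w
      by_cases h1 : w = x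
      · rcases eq_or_ne w y with h2 | h2
        · exact absurd (h1.symm.trans h2) hxy
        · simp [hfdef, h1, h2, hxy]
      · by_cases h2 : w = y
        · simp [hfdef, h1, h2, hyx]; ring
        · simp [hfdef, h1, h2]
    simp only [Matrix.mulVec, dotProduct, hterm, Finset.sum_add_distrib,
      ← Finset.mul_sum, Finset.sum_ite_eq', Finset.mem_univ, if_true]
  have hE : pip pi f (P.mulVec f) = 2 * s * b + s^2 * cc := by
    simp only [pip, hfdef]
    have : ∀ z, pi z * ((if z = x then (1:ℝ) else 0) + s * (if z = y then 1 else 0))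
        * (P.mulVec f) z
        = (if z = x then pi x * (P.mulVec f) x else 0)
          + s * (if z = y then pi y * (P.mulVec f) y else 0) := by
      intro z
      by_cases hzx : z = x
      · rcases eq_or_ne z y with hzy | hzy
        · exact absurd (hzx.symm.trans hzy) hxy
        · simp [hzx, hzy, hxy, hyx]
      · by_cases hzy : z = y
        · simp [hzx, hzy, hxy, hyx]; ring
        · simp [hzx, hzy, hxy, hyx]
    rw [← hfdef]
    simp only [this, Finset.sum_add_distrib, ← Finset.mul_sum, Finset.sum_ite_eq',
      Finset.mem_univ, if_true]
    rw [hmv x, hmv y, hxx, hbdef, hccdef]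
    linear_combination s * hrev y x
  have h0 := hpsd f
  rw [hE] at h0
  have hd : 0 < cc + b := by linarith
  have hs : s = -(b/(cc+b)) := rfl
  rw [hs] at h0
  have : 2 * -(b / (cc + b)) * b + (-(b / (cc + b)))^2 * cc
      = -(b^2 * (cc + 2*b)) / (cc+b)^2 := by
    field_simp
    ring
  rw [this, le_div_iff₀ (by positivity : (0:ℝ) < (cc+b)^2)] at h0
  nlinarith [mul_pos (mul_pos hb hb) hb, mul_pos (mul_pos hb hb) hd]

lemma survProb_zero [Fintype V] [DecidableEq V] (P : Matrix V V ℝ) (h y : V) :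
    survProb P h y 0 = if y = h then 0 else 1 := by
  rw [survProb]

  rw [← Equiv.sum_comp (Fin.consEquiv (fun _ : Fin (0+1) => V))
    (fun p => if p 0 = y ∧ (∀ s, p s ≠ h) then ∏ s : Fin 0, P (p s.castSucc) (p s.succ) else 0)]
  rw [Fintype.sum_prod_type]
  simp only [Fin.consEquiv_apply, Fin.cons_zero, Fin.forall_fin_succ, Fin.cons_succ]
  simp only [Finset.univ_unique, Finset.sum_const, smul_eq_mul]
  simp only [Finset.sum_singleton, Fin.prod_univ_zero]
  have : ∀ x : V, (if x = y ∧ x ≠ h ∧ ∀ (i : Fin 0), (default : Fin 0 → V) i ≠ h then (1:ℝ) else 0)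
      = if x = y then (if y = h then 0 else 1) else 0 := by
    intro x
    by_cases hx : x = y <;> by_cases hy : y = h <;> simp [hx, hy, IsEmpty.forall_iff]
  simp only [this, Finset.sum_ite_eq', Finset.mem_univ, if_true]

theorem stmt13 [Fintype V] [DecidableEq V] (P : Matrix V V ℝ) (pi : V → ℝ)
    (hP : ∀ x y, 0 ≤ P x y) (hrow : ∀ x, ∑ y, P x y = 1)
    (hpi : ∀ x, 0 < pi x) (hpisum : ∑ x, pi x = 1)
    (hrev : ∀ x y, pi x * P x y = pi y * P y x)
    (hirr : ∀ x y, ∃ t : ℕ, 0 < (P ^ t) x y)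
    (hpsd : ∀ f : V → ℝ, 0 ≤ pip pi f (P.mulVec f)) (h : V) (hn : 2 ≤ Fintype.card V) :
    (∃ q : V → ℝ, (∀ v, 0 ≤ q v) ∧ q h = 0 ∧ (∑ v, q v) = 1 ∧
        sSup {r : ℝ | ∃ f : V → ℝ, pip pi f f = 1 ∧
            r = pip pi f ((Dmat h * P * Dmat h).mulVec f)} =
          1 - 1 / EhitFrom P q h) ∧
      opNorm pi (Dmat h * P * Dmat h) ≤ 1 - 1 / thit P := by
  classical
  have hVne : Nonempty V := ⟨h⟩
  set Q := Dmat h * P * Dmat h with hQdef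
  have hQapp : ∀ x y, Q x y = if x = h ∨ y = h then 0 else P x y :=
    fun x y => Dmat_apply_mul h P x y
  have hQnn : ∀ x y, 0 ≤ Q x y := by
    intro x y; rw [hQapp]; split_ifs
    · exact le_refl 0
    · exact hP x y
  have hQrev : ∀ x y, pi x * Q x y = pi y * Q y x := by
    intro x y
    rw [hQapp, hQapp]
    by_cases hx : x = h <;> by_cases hy : y = h <;> simp [hx, hy, hrev x y]
  have hQmv : ∀ f, Q *ᵥ f = Dmat h *ᵥ (P *ᵥ (Dmat h *ᵥ f)) := by
    intro f
    rw [hQdef, ← Matrix.mulVec_mulVec, ← Matrix.mulVec_mulVec]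
  have hpipD : ∀ f w, pip pi f (Dmat h *ᵥ w) = pip pi (Dmat h *ᵥ f) w := by
    intro f w
    rw [Dmat_mulVec, Dmat_mulVec]
    refine Finset.sum_congr rfl fun x _ => ?_
    by_cases hx : x = h <;> simp [hx]
  have hQpsd : ∀ f, 0 ≤ pip pi f (Q *ᵥ f) := by
    intro f; rw [hQmv, hpipD]; exact hpsd _
  have hQsa : ∀ f g, pip pi f (Q *ᵥ g) = pip pi (Q *ᵥ f) g := pip_symm_of_rev pi Q hQrev
  -- transfer to a symmetric matrix
  set sq : V → ℝ := fun x => Real.sqrt (pi x) with hsqdef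
  have hsqpos : ∀ x, 0 < sq x := fun x => Real.sqrt_pos.mpr (hpi x)
  have hsqmul : ∀ x, sq x * sq x = pi x := fun x => Real.mul_self_sqrt (hpi x).le
  set φ : (V → ℝ) → (V → ℝ) := fun f x => sq x * f x with hφdef
  set S : Matrix V V ℝ := Matrix.of (fun x y => sq x * Q x y * (sq y)⁻¹) with hSdef
  have hSsym : S.IsHermitian := by
    rw [Matrix.IsHermitian]
    ext x y
    simp only [Matrix.conjTranspose_apply, hSdef, Matrix.of_apply, star_trivial]
    have hx0 : sq x ≠ 0 := (hsqpos x).ne'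
    have hy0 : sq y ≠ 0 := (hsqpos y).ne'
    field_simp
    linear_combination Q y x * hsqmul y - Q x y * hsqmul x + hQrev y x
  have hφdot : ∀ f g, φ f ⬝ᵥ φ g = pip pi f g := by
    intro f g
    simp only [dotProduct, pip, hφdef]
    exact Finset.sum_congr rfl fun x _ => by rw [← hsqmul x]; ring
  have hSφ : ∀ f, S *ᵥ φ f = φ (Q *ᵥ f) := by
    intro f
    funext x
    simp only [Matrix.mulVec, dotProduct, hSdef, Matrix.of_apply, hφdef, Finset.mul_sum]
    refine Finset.sum_congr rfl fun y _ => ?_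
    have hy : (sq y)⁻¹ * sq y = 1 := inv_mul_cancel₀ (hsqpos y).ne'
    linear_combination (sq x * Q x y * f y) * hy
  have hφsurj : ∀ F : V → ℝ, F = φ (fun x => (sq x)⁻¹ * F x) := by
    intro F; funext x
    simp only [hφdef]
    rw [← mul_assoc, mul_inv_cancel₀ (hsqpos x).ne', one_mul]
  have hSpsd : ∀ F : V → ℝ, 0 ≤ F ⬝ᵥ S *ᵥ F := by
    intro F
    rw [hφsurj F, hSφ, hφdot]
    exact hQpsd _
  obtain ⟨μ, hμnn, hR1', hR2', hR3', W, hWnorm, hWeig⟩ := spectral_max S hSsym hSpsd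
  have hR1 : ∀ f, pip pi f (Q *ᵥ f) ≤ μ * pip pi f f := by
    intro f; have := hR1' (φ f); rwa [hSφ, hφdot, hφdot] at this
  have hR2 : ∀ f, pip pi (Q *ᵥ f) (Q *ᵥ f) ≤ μ^2 * pip pi f f := by
    intro f; have := hR2' (φ f); rwa [hSφ, hφdot, hφdot] at this
  have hφsmul : ∀ (a : ℝ) f, φ (a • f) = a • φ f := by
    intro a f; funext x; simp only [hφdef, Pi.smul_apply, smul_eq_mul]; ring
  have hφinj : ∀ f g, φ f = φ g → f = g := by
    intro f g he; funext x
    have h2 := congrFun he x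
    simp only [hφdef] at h2
    exact mul_left_cancel₀ (hsqpos x).ne' h2
  have hR3 : ∀ f, pip pi f (Q *ᵥ f) = μ * pip pi f f → Q *ᵥ f = μ • f := by
    intro f hf
    have h2 := hR3' (φ f) (by rw [hSφ, hφdot, hφdot]; exact hf)
    rw [hSφ] at h2
    exact hφinj _ _ (h2.trans (hφsmul μ f).symm)
  -- a nonnegative maximizing eigenvector
  set w : V → ℝ := fun x => (sq x)⁻¹ * W x with hwdef
  have hWw : φ w = W := by
    funext x
    simp only [hφdef, hwdef]
    rw [← mul_assoc, mul_inv_cancel₀ (hsqpos x).ne', one_mul]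
  have hwnorm : pip pi w w = 1 := by rw [← hφdot, hWw]; exact hWnorm
  have hweig : Q *ᵥ w = μ • w := by
    apply hφinj
    rw [← hSφ, hWw, hWeig, hφsmul, hWw]
  set g : V → ℝ := fun x => |w x| with hgdef
  have hgnn : ∀ v, 0 ≤ g v := fun v => abs_nonneg _
  have hgnorm : pip pi g g = 1 := by
    rw [← hwnorm]
    simp only [pip, hgdef]
    exact Finset.sum_congr rfl fun x _ => by rw [mul_assoc, mul_assoc, abs_mul_abs_self]
  have hray_w : pip pi w (Q *ᵥ w) = μ := by
    rw [hweig, pip_smul_right, hwnorm, mul_one]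
  have hray_g : pip pi g (Q *ᵥ g) = μ := by
    have hle : pip pi g (Q *ᵥ g) ≤ μ := by
      have := hR1 g; rwa [hgnorm, mul_one] at this
    have hge : μ ≤ pip pi g (Q *ᵥ g) := by
      rw [← hray_w, pip_expand, pip_expand]
      refine Finset.sum_le_sum fun x _ => Finset.sum_le_sum fun y _ => ?_
      have h1 : 0 ≤ pi x * Q x y := mul_nonneg (hpi x).le (hQnn x y)
      calc pi x * Q x y * w x * w y = (pi x * Q x y) * (w x * w y) := by ring
        _ ≤ (pi x * Q x y) * |w x * w y| := mul_le_mul_of_nonneg_left (le_abs_self _) h1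
        _ = pi x * Q x y * g x * g y := by simp only [hgdef, abs_mul]; ring
    linarith
  have hgeig : Q *ᵥ g = μ • g := hR3 g (by rw [hray_g, hgnorm, mul_one])
  -- positivity of μ
  obtain ⟨x0, hx0⟩ := Fintype.exists_ne_of_one_lt_card (by omega) h
  have hPxx := Pdiag_pos P pi hP hrow hpi hrev hpsd
  have hμpos : 0 < μ := by
    set f0 : V → ℝ := fun z => if z = x0 then (sq x0)⁻¹ else 0 with hf0
    have hf0norm : pip pi f0 f0 = 1 := by
      simp only [pip, hf0]
      have hterm : ∀ z, pi z * (if z = x0 then (sq x0)⁻¹ else 0) * (if z = x0 then (sq x0)⁻¹ else 0)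
          = if z = x0 then 1 else 0 := by
        intro z
        by_cases hz : z = x0
        · simp only [hz, if_pos rfl]
          rw [← hsqmul x0]
          field_simp
          simp only [if_true]
          rw [div_pow, one_pow, mul_one_div, div_self (pow_ne_zero 2 (hsqpos x0).ne')]
        · simp [hz]
      rw [Finset.sum_congr rfl fun z _ => hterm z]
      simp
    have hmv0 : ∀ z, (Q *ᵥ f0) z = Q z x0 * (sq x0)⁻¹ := by
      intro z
      simp only [Matrix.mulVec, dotProduct, hf0, mul_ite, mul_zero,
        Finset.sum_ite_eq', Finset.mem_univ, if_true]
    have hf0ray : pip pi f0 (Q *ᵥ f0) = P x0 x0 := by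
      simp only [pip, hf0]
      have hterm : ∀ z, pi z * (if z = x0 then (sq x0)⁻¹ else 0) * (Q *ᵥ f0) z
          = if z = x0 then P x0 x0 else 0 := by
        intro z
        by_cases hz : z = x0
        · subst hz
          rw [if_pos rfl, if_pos rfl, hmv0, hQapp, if_neg (by simp [hx0]), ← hsqmul z]
          field_simp
          exact mul_div_cancel_left₀ _ (hsqpos z).ne'
        · rw [if_neg hz, if_neg hz, mul_zero, zero_mul]
      rw [Finset.sum_congr rfl fun z _ => hterm z]
      simp
    have := hR1 f0
    rw [hf0norm, hf0ray, mul_one] at this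
    linarith [hPxx x0]
  have hgh : g h = 0 := by
    have hQgh : (Q *ᵥ g) h = 0 := by
      simp only [Matrix.mulVec, dotProduct]
      refine Finset.sum_eq_zero fun z _ => ?_
      rw [hQapp, if_pos (Or.inl rfl), zero_mul]
    have h2 := congrFun hgeig h
    rw [hQgh] at h2
    have h3 : μ * g h = 0 := by simpa using h2.symm
    rcases mul_eq_zero.mp h3 with hc | hc
    · exact absurd hc hμpos.ne'
    · exact hc
  have hDg : Dmat h *ᵥ g = g := by
    rw [Dmat_mulVec]
    funext x
    by_cases hx : x = h
    · rw [hx, if_pos rfl, hgh]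
    · rw [if_neg hx]
  have hgPg : pip pi g (P *ᵥ g) = μ := by
    have h2 := hray_g
    rw [hQmv, hpipD, hDg] at h2
    exact h2
  have hdiri := dirichlet_identity pi P hrow hrev g
  rw [hgnorm, hgPg] at hdiri
  have hdnn : ∀ x, ∀ y, 0 ≤ pi x * P x y * (g x - g y)^2 := fun x y =>
    mul_nonneg (mul_nonneg (hpi x).le (hP x y)) (sq_nonneg _)
  have hμle1 : μ ≤ 1 := by
    have h2 : 0 ≤ ∑ x, ∑ y, pi x * P x y * (g x - g y)^2 :=
      Finset.sum_nonneg fun x _ => Finset.sum_nonneg fun y _ => hdnn x y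
    linarith
  have hμlt1 : μ < 1 := by
    rcases hμle1.lt_or_eq with hlt | heq1
    · exact hlt
    exfalso
    rw [heq1] at hdiri
    have hz0 : ∑ x, ∑ y, pi x * P x y * (g x - g y)^2 = 0 := by linarith
    have hz1 := (Finset.sum_eq_zero_iff_of_nonneg
      (fun x _ => Finset.sum_nonneg fun y _ => hdnn x y)).mp hz0
    have hz2 : ∀ x y, pi x * P x y * (g x - g y)^2 = 0 := fun x y =>
      (Finset.sum_eq_zero_iff_of_nonneg (fun y _ => hdnn x y)).mp
        (hz1 x (Finset.mem_univ x)) y (Finset.mem_univ y)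
    have hconst := const_of_irr P hP hirr g (fun x y hPxy => by
      have h3 := hz2 x y
      have h4 : (g x - g y)^2 = 0 := by
        rcases mul_eq_zero.mp h3 with h5 | h5
        · rcases mul_eq_zero.mp h5 with h6 | h6
          · exact absurd h6 (hpi x).ne'
          · exact absurd h6 hPxy.ne'
        · exact h5
      have h5 := pow_eq_zero_iff (n := 2) (by norm_num) |>.mp h4
      linarith)
    have hg0 : ∀ v, g v = 0 := fun v => (hconst v h).trans hgh
    have : pip pi g g = 0 := by
      simp only [pip]
      exact Finset.sum_eq_zero fun x _ => by rw [hg0 x]; ring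
    rw [hgnorm] at this
    linarith
  -- survival probabilities as a vector iteration
  set u : ℕ → V → ℝ := fun t y => survProb P h y t with hudef
  have hunn : ∀ t y, 0 ≤ u t y := fun t y => survProb_nonneg P hP h y t
  have hu0 : u 0 = fun y => if y = h then 0 else 1 := funext fun y => survProb_zero P h y
  have hurec : ∀ t, u (t+1) = Q *ᵥ u t := by
    intro t
    funext y
    have hs := survProb_succ P h y t
    by_cases hy : y = h
    · rw [hudef]
      simp only
      rw [hs, if_pos hy, hy]
      symm
      simp only [Matrix.mulVec, dotProduct]
      refine Finset.sum_eq_zero fun z _ => ?_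
      rw [hQapp, if_pos (Or.inl rfl), zero_mul]
    · rw [hudef]
      simp only
      rw [hs, if_neg hy]
      simp only [Matrix.mulVec, dotProduct]
      refine Finset.sum_congr rfl fun z _ => ?_
      by_cases hz : z = h
      · rw [hz, survProb_self, hQapp, if_pos (Or.inr rfl), mul_zero, zero_mul]
      · rw [hQapp, if_neg (by tauto)]
  set c := ∑ v, pi v * g v with hcdef
  have hcpos : 0 < c := by
    have hex : ∃ v, g v ≠ 0 := by
      by_contra hc
      push_neg at hc
      have : pip pi g g = 0 := by
        simp only [pip]
        exact Finset.sum_eq_zero fun x _ => by rw [hc x]; ring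
      rw [hgnorm] at this; linarith
    obtain ⟨v0, hv0⟩ := hex
    refine Finset.sum_pos' (fun v _ => mul_nonneg (hpi v).le (hgnn v)) ?_
    exact ⟨v0, Finset.mem_univ v0, mul_pos (hpi v0) ((hgnn v0).lt_of_ne (Ne.symm hv0))⟩
  have hgu : ∀ t, pip pi g (u t) = μ ^ t * c := by
    intro t
    induction t with
    | zero =>
      rw [hu0, pow_zero, one_mul, hcdef]
      simp only [pip]
      refine Finset.sum_congr rfl fun v _ => ?_
      by_cases hv : v = h
      · rw [hv, hgh]; simp
      · rw [if_neg hv, mul_one]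
    | succ t ih =>
      rw [hurec t, hQsa, hgeig, pip_smul_left, ih, pow_succ]
      ring
  set q : V → ℝ := fun v => pi v * g v / c with hqdef
  have hqnn : ∀ v, 0 ≤ q v := fun v =>
    div_nonneg (mul_nonneg (hpi v).le (hgnn v)) hcpos.le
  have hqh : q h = 0 := by rw [hqdef]; simp only; rw [hgh, mul_zero, zero_div]
  have hqsum : ∑ v, q v = 1 := by
    rw [hqdef]
    simp only
    rw [← Finset.sum_div, ← hcdef, div_self hcpos.ne']
  have hqu : ∀ t, ∑ y, q y * u t y = μ ^ t := by
    intro t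
    have hterm : ∀ y, q y * u t y = (pi y * g y * u t y) / c := by
      intro y; rw [hqdef]; simp only; ring
    rw [Finset.sum_congr rfl fun y _ => hterm y, ← Finset.sum_div]
    have : ∑ y, pi y * g y * u t y = pip pi g (u t) := rfl
    rw [this, hgu t, mul_div_assoc, div_self hcpos.ne', mul_one]
  set K := pip pi (u 0) (u 0) with hKdef
  have hK0 : 0 ≤ K := by
    rw [hKdef]
    exact Finset.sum_nonneg fun x _ =>
      mul_nonneg (mul_nonneg (hpi x).le (hunn 0 x)) (hunn 0 x)
  have huK : ∀ t, pip pi (u t) (u t) ≤ (μ^t)^2 * K := by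
    intro t
    induction t with
    | zero => rw [pow_zero, one_pow, one_mul]
    | succ t ih =>
      rw [hurec t]
      calc pip pi (Q *ᵥ u t) (Q *ᵥ u t) ≤ μ^2 * pip pi (u t) (u t) := hR2 (u t)
        _ ≤ μ^2 * ((μ^t)^2 * K) := mul_le_mul_of_nonneg_left ih (sq_nonneg μ)
        _ = (μ^(t+1))^2 * K := by ring
  have hbound : ∀ t y, u t y ≤ μ^t * Real.sqrt (K / pi y) := by
    intro t y
    have h1 : pi y * u t y * u t y ≤ pip pi (u t) (u t) := by
      refine Finset.single_le_sum (f := fun x => pi x * u t x * u t x)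
        (fun x _ => mul_nonneg (mul_nonneg (hpi x).le (hunn t x)) (hunn t x))
        (Finset.mem_univ y)
    have h3 : (u t y)^2 * pi y ≤ (μ^t)^2 * K := by
      calc (u t y)^2 * pi y = pi y * u t y * u t y := by ring
        _ ≤ pip pi (u t) (u t) := h1
        _ ≤ (μ^t)^2 * K := huK t
    have h2 : (u t y)^2 ≤ (μ^t)^2 * (K / pi y) := by
      rw [mul_div_assoc']
      exact (le_div_iff₀ (hpi y)).mpr h3
    calc u t y = Real.sqrt ((u t y)^2) := (Real.sqrt_sq (hunn t y)).symm
      _ ≤ Real.sqrt ((μ^t)^2 * (K / pi y)) := Real.sqrt_le_sqrt h2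
      _ = μ^t * Real.sqrt (K / pi y) := by
          rw [Real.sqrt_mul (sq_nonneg _), Real.sqrt_sq (pow_nonneg hμnn t)]
  have hsummable : ∀ y, Summable fun t => u t y := by
    intro y
    refine Summable.of_nonneg_of_le (fun t => hunn t y) (fun t => hbound t y) ?_
    exact (summable_geometric_of_lt_one hμnn hμlt1).mul_right _
  have hEFrom : EhitFrom P q h = (1 - μ)⁻¹ := by
    rw [EhitFrom, tsum_congr hqu]
    exact tsum_geometric_of_lt_one hμnn hμlt1
  have hub : ∀ r ∈ {r : ℝ | ∃ f : V → ℝ, pip pi f f = 1 ∧ r = pip pi f (Q.mulVec f)}, r ≤ μ := by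
    rintro r ⟨f, hf1, rfl⟩
    have := hR1 f
    rwa [hf1, mul_one] at this
  have hmem : μ ∈ {r : ℝ | ∃ f : V → ℝ, pip pi f f = 1 ∧ r = pip pi f (Q.mulVec f)} :=
    ⟨g, hgnorm, hray_g.symm⟩
  have hsSup : sSup {r : ℝ | ∃ f : V → ℝ, pip pi f f = 1 ∧ r = pip pi f (Q.mulVec f)} = μ :=
    le_antisymm (csSup_le ⟨μ, hmem⟩ hub) (le_csSup ⟨μ, hub⟩ hmem)
  constructor
  · refine ⟨q, hqnn, hqh, hqsum, ?_⟩
    rw [hsSup, hEFrom, one_div, inv_inv]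
    ring
  · have hop : opNorm pi Q ≤ μ := by
      rw [opNorm]
      refine csSup_le ⟨Real.sqrt (pip pi (Q *ᵥ (fun _ => 0)) (Q *ᵥ (fun _ => 0))),
        ⟨fun _ => 0, by simp [pip], rfl⟩⟩ ?_
      rintro r ⟨f, hf1, rfl⟩
      have h2 : pip pi (Q *ᵥ f) (Q *ᵥ f) ≤ μ^2 := by
        have h3 := hR2 f
        nlinarith [sq_nonneg μ]
      calc Real.sqrt (pip pi (Q *ᵥ f) (Q *ᵥ f)) ≤ Real.sqrt (μ^2) := Real.sqrt_le_sqrt h2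
        _ = μ := by rw [Real.sqrt_sq hμnn]
    by_cases hbdd : BddAbove (Set.range fun p : V × V => Ehit P p.1 p.2)
    · have hEle : ∀ y, Ehit P h y ≤ thit P := fun y => le_ciSup hbdd (h, y)
      have hE2 : EhitFrom P q h = ∑ y, q y * Ehit P h y := by
        rw [EhitFrom]
        rw [Summable.tsum_finsetSum (fun y _ => ((hsummable y).mul_left (q y)))]
        exact Finset.sum_congr rfl fun y _ => tsum_mul_left
      have hle2 : (1 - μ)⁻¹ ≤ thit P := by
        rw [← hEFrom, hE2]
        calc ∑ y, q y * Ehit P h y ≤ ∑ y, q y * thit P :=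
              Finset.sum_le_sum fun y _ => mul_le_mul_of_nonneg_left (hEle y) (hqnn y)
          _ = thit P := by rw [← Finset.sum_mul, hqsum, one_mul]
      have hEpos : (0:ℝ) < (1 - μ)⁻¹ := inv_pos.mpr (by linarith)
      have h1t : 1 / thit P ≤ 1 - μ := by
        have h2 := one_div_le_one_div_of_le hEpos hle2
        rwa [one_div ((1-μ)⁻¹), inv_inv] at h2
      linarith [hop]
    · rw [thit, Real.iSup_of_not_bddAbove hbdd]
      simp only [div_zero]
      linarith [hop]
end

section
/- Path fact: in a finite connected simple graph G on n vertices with minimum degree d_min, any geodesic (shortest) path x_0, ..., x_ℓ satisfies ℓ ≤ 3n/d_min − 1. In particular, the diameter of G is at most 3n/d_min − 1. -/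
open Finset

variable {V : Type*}

lemma aux_exists_walk_getVert {V : Type*} {G : SimpleGraph V} {x y : V} (p : G.Walk x y)
    (m : ℕ) (hm : m ≤ p.length) : ∃ q : G.Walk x (p.getVert m), q.length = m := by
  induction p generalizing m with
  | nil => simp_all
  | cons h q ih =>
    cases m with
    | zero => exact ⟨SimpleGraph.Walk.nil.copy rfl (SimpleGraph.Walk.getVert_zero _).symm, rfl⟩
    | succ k =>
      obtain ⟨r, hr⟩ := ih k (by simpa using hm)
      exact ⟨(r.cons h).copy rfl (by rw [SimpleGraph.Walk.getVert_cons_succ]), by simp [hr]⟩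

lemma aux_dist_getVert_le {V : Type*} {G : SimpleGraph V} {x y : V} (p : G.Walk x y)
    (m : ℕ) (hm : m ≤ p.length) : G.dist x (p.getVert m) ≤ m := by
  obtain ⟨q, hq⟩ := aux_exists_walk_getVert p m hm
  exact le_of_le_of_eq (SimpleGraph.dist_le q) hq

lemma aux_dist_getVert_right {V : Type*} {G : SimpleGraph V} {x y : V} (p : G.Walk x y)
    (m : ℕ) (hm : m ≤ p.length) : G.dist (p.getVert m) y ≤ p.length - m := by
  have h := aux_dist_getVert_le p.reverse (p.length - m) (by rw [SimpleGraph.Walk.length_reverse]; omega)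
  rw [SimpleGraph.Walk.getVert_reverse] at h
  have : p.length - (p.length - m) = m := by omega
  rw [this] at h
  rw [SimpleGraph.dist_comm]
  exact h


theorem stmt14 [Fintype V] [Nonempty V] [DecidableEq V] (G : SimpleGraph V)
    [DecidableRel G.Adj] (hconn : G.Connected) (hcard : 2 ≤ Fintype.card V) :
    (∀ (x y : V) (p : G.Walk x y), p.length = G.dist x y →
        (p.length : ℝ) ≤ 3 * Fintype.card V / dminR G - 1) ∧
      ∀ x y : V, (G.dist x y : ℝ) ≤ 3 * Fintype.card V / dminR G - 1 := by
  classical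
  set n := Fintype.card V with hn
  -- every vertex has positive degree
  have hdeg : ∀ v : V, 0 < G.degree v := by
    intro v
    rw [SimpleGraph.degree_pos_iff_exists_adj]
    obtain ⟨w, hw⟩ := Fintype.exists_ne_of_one_lt_card (by omega) v
    obtain ⟨q⟩ := hconn v w
    have hnil : ¬ q.Nil := by
      intro hq
      exact hw hq.eq.symm
    exact ⟨q.getVert 1, q.adj_snd hnil⟩
  set dnat : ℕ := Finset.univ.inf' Finset.univ_nonempty (fun v => G.degree v) with hdnat
  have hd1 : 1 ≤ dnat := Finset.le_inf' _ _ (fun v _ => hdeg v)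
  have hdle : ∀ v : V, dnat ≤ G.degree v := fun v => Finset.inf'_le _ (Finset.mem_univ v)
  have hcastd : dminR G = (dnat : ℝ) := by
    rw [dminR, hdnat]
    exact (Finset.apply_inf'_eq_inf'_comp Finset.univ_nonempty (Nat.cast : ℕ → ℝ)
      (fun a b => by simp [Nat.cast_min])).symm
  have hd0 : (0:ℝ) < (dnat : ℝ) := by exact_mod_cast hd1
  have main : ∀ (x y : V) (p : G.Walk x y), p.length = G.dist x y →
      (p.length : ℝ) ≤ 3 * n / dminR G - 1 := by
    intro x y p hp
    set ℓ := p.length with hℓ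
    set k := ℓ / 3 with hk
    -- distance lower bound between milestones
    have hdistlow : ∀ i j : ℕ, i < j → 3*j ≤ ℓ →
        3 ≤ G.dist (p.getVert (3*i)) (p.getVert (3*j)) := by
      intro i j hij hjl
      have ha := aux_dist_getVert_le p (3*i) (by omega)
      have hb := aux_dist_getVert_right p (3*j) (by omega)
      have ht1 := hconn.dist_triangle (u := x) (v := p.getVert (3*i)) (w := y)
      have ht2 := hconn.dist_triangle (u := p.getVert (3*i)) (v := p.getVert (3*j)) (w := y)
      rw [← hp] at ht1
      omega
    have hdist3 : ∀ i j : ℕ, 3*i ≤ ℓ → 3*j ≤ ℓ → i ≠ j →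
        3 ≤ G.dist (p.getVert (3*i)) (p.getVert (3*j)) := by
      intro i j hi hj hij
      rcases lt_or_gt_of_ne hij with h | h
      · exact hdistlow i j h hj
      · rw [SimpleGraph.dist_comm]; exact hdistlow j i h hi
    set f : ℕ → Finset V := fun i => G.neighborFinset (p.getVert (3*i)) with hf
    have hdisj : ∀ i ∈ Finset.range (k+1), ∀ j ∈ Finset.range (k+1), i ≠ j →
        Disjoint (f i) (f j) := by
      intro i hi j hj hij
      rw [Finset.mem_range] at hi hj
      rw [Finset.disjoint_left]
      intro w hwi hwj
      rw [hf, SimpleGraph.mem_neighborFinset] at hwi hwj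
      have h1 : G.dist (p.getVert (3*i)) w ≤ 1 :=
        le_of_le_of_eq (SimpleGraph.dist_le (SimpleGraph.Walk.cons hwi SimpleGraph.Walk.nil))
          (by simp)
      have h2 : G.dist w (p.getVert (3*j)) ≤ 1 :=
        le_of_le_of_eq (SimpleGraph.dist_le (SimpleGraph.Walk.cons hwj.symm SimpleGraph.Walk.nil))
          (by simp)
      have ht := hconn.dist_triangle (u := p.getVert (3*i)) (v := w) (w := p.getVert (3*j))
      have h3 := hdist3 i j (by omega) (by omega) hij
      omega
    have hcard2 : (k+1) * dnat ≤ n := by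
      calc (k+1) * dnat = ∑ _i ∈ Finset.range (k+1), dnat := by
            rw [Finset.sum_const, Finset.card_range, smul_eq_mul]
        _ ≤ ∑ i ∈ Finset.range (k+1), (f i).card := by
            apply Finset.sum_le_sum
            intro i _
            rw [hf, SimpleGraph.card_neighborFinset_eq_degree]
            exact hdle _
        _ = ((Finset.range (k+1)).biUnion f).card := (Finset.card_biUnion hdisj).symm
        _ ≤ n := by rw [hn, ← Finset.card_univ]; exact Finset.card_le_card (Finset.subset_univ _)
    have hnat : (ℓ+1) * dnat ≤ 3 * n := by
      calc (ℓ+1) * dnat ≤ (3*(k+1)) * dnat := Nat.mul_le_mul_right _ (by omega)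
        _ = 3*((k+1)*dnat) := by ring
        _ ≤ 3*n := by omega
    have hd0' : 0 < dminR G := by rw [hcastd]; exact hd0
    rw [le_sub_iff_add_le, le_div_iff₀ hd0', hcastd]
    exact_mod_cast hnat
  refine ⟨main, fun x y => ?_⟩
  obtain ⟨p, hp⟩ := hconn.exists_walk_length_eq_dist x y
  calc ((G.dist x y : ℕ) : ℝ) = (p.length : ℝ) := by rw [hp]
    _ ≤ 3 * n / dminR G - 1 := main x y p hp
end
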